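/- arXiv:1611.04113 — 9 statements merged into one kernel-verified Lean document; each statement's English description precedes it below -/
import Mathlib

section
/- For every t ≥ 0 and every ξ ∈ ℝ, |exp(−t ξ² / (1 + iξ)) − 1| ≤ t |ξ|. -/
/-!
The exponent `z = -tξ²/(1 + iξ)` lies in the closed left half-plane, since `Re (1/(1 + iξ)) > 0`.
There `|exp' w| = exp (Re w) ≤ 1`, so the mean value inequality on the segment `[0, z]` gives
`|exp z - 1| ≤ |z|`, and `|1 + iξ| ≥ |ξ|` gives `|z| ≤ t|ξ|`.
-/

open Complex

theorem Complex.norm_exp_sub_one_le_norm_of_re_nonpos {z : ℂ} (hz : z.re ≤ 0) :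
    ‖exp z - 1‖ ≤ ‖z‖ := by
  have hderiv_le : ∀ w ∈ {w : ℂ | w.re ≤ 0}, ‖deriv exp w‖ ≤ 1 := fun w hw => by
    simpa [Complex.norm_exp] using hw
  simpa [exp_zero] using (convex_halfSpace_re_le 0).norm_image_sub_le_of_norm_deriv_le
    (fun w _ => differentiableAt_exp) hderiv_le (x := 0) (by simp) hz

theorem Complex.re_ofReal_div_nonneg {c : ℝ} (hc : 0 ≤ c) {w : ℂ} (hw : 0 ≤ w.re) :
    0 ≤ ((c : ℂ) / w).re := by
  rw [div_eq_mul_inv, re_ofReal_mul, inv_re]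
  exact mul_nonneg hc (div_nonneg hw (normSq_nonneg w))

theorem Complex.norm_ofReal_div_one_add_I_mul_le_one (ξ : ℝ) : ‖(ξ : ℂ) / (1 + I * ξ)‖ ≤ 1 := by
  rw [norm_div, norm_real, Real.norm_eq_abs]
  exact div_le_one_of_le₀ (by simpa using abs_im_le_norm (1 + I * ξ)) (norm_nonneg _)

/-- Pointwise frequency-side form of the local error estimate for the flow `X^t` of
`v_t = K*v - v + v_x`: for `t ≥ 0` and `ξ ∈ ℝ`, `|exp(-tξ²/(1+iξ)) - 1| ≤ t|ξ|`. -/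
theorem abs_semigroup_multiplier_sub_one_le (t : ℝ) (ht : 0 ≤ t) (ξ : ℝ) :
    ‖Complex.exp (-(t * ξ ^ 2 : ℂ) / (1 + Complex.I * ξ)) - 1‖ ≤ t * |ξ| := by
  have hexponent : -(t * ξ ^ 2 : ℂ) / (1 + I * ξ) = -(((t * ξ ^ 2 : ℝ) : ℂ) / (1 + I * ξ)) := by
    push_cast; ring
  have hre : (-(t * ξ ^ 2 : ℂ) / (1 + I * ξ)).re ≤ 0 := by
    rw [hexponent, neg_re, neg_nonpos]
    exact re_ofReal_div_nonneg (by positivity) (by simp)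
  have hnorm : ‖-(t * ξ ^ 2 : ℂ) / (1 + I * ξ)‖ ≤ t * |ξ| :=
    calc ‖-(t * ξ ^ 2 : ℂ) / (1 + I * ξ)‖ = t * |ξ| * ‖(ξ : ℂ) / (1 + I * ξ)‖ := by
          rw [norm_div, norm_div, norm_neg, norm_mul, norm_pow, norm_real, norm_real,
            Real.norm_eq_abs, Real.norm_eq_abs, abs_of_nonneg ht]
          ring
      _ ≤ t * |ξ| := mul_le_of_le_one_right (by positivity) (norm_ofReal_div_one_add_I_mul_le_one ξ)
  exact (norm_exp_sub_one_le_norm_of_re_nonpos hre).trans hnorm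
end

section
/- Let K(z) = e^{-z} for z > 0 and K(z) = 0 for z ≤ 0. Let v : ℝ → ℝ be differentiable at every point, with v ∈ L²(ℝ) and derivative v' ∈ L²(ℝ). Then the function x ↦ (K*v)(x) − v(x) + v'(x) belongs to L²(ℝ) and ‖K*v − v + v'‖_{L²(ℝ)} ≤ ‖v'‖_{L²(ℝ)}. -/
open MeasureTheory Real Set Filter
open scoped ENNReal

/-! Write `w = K * v`. Since `w(x) = e^{-x} ∫_{-∞}^x e^t v(t) dt`, we have `w' = v - w`, so the
operator is `v' - u` with `u = v - w = w'`; and `w ∈ L²` because averaging translates of `v`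
against the probability density `K` does not increase the `L²` norm. Integrating by parts,
`∫ v v' = ∫ w w' = 0` and `∫ v' w = -∫ v u`, which give `⟨v', u⟩ = ∫ v u = ‖u‖²`. Hence
`‖v' - u‖² = ‖v'‖² - ‖u‖² ≤ ‖v'‖²`. -/

section TranslationAverage

variable {G E : Type*} [MeasurableSpace G] [AddGroup G] [MeasurableAdd G] [MeasurableSub₂ G]
  {μ : Measure G} [SFinite μ] [μ.IsAddRightInvariant]
  [NormedAddCommGroup E] [NormedSpace ℝ E]

theorem eLpNorm_integral_comp_sub_le (ν : Measure G) [IsProbabilityMeasure ν] {p : ℝ≥0∞}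
    (hp : 1 ≤ p) (hp_top : p ≠ ∞) {v : G → E} (hv : StronglyMeasurable v) :
    eLpNorm (fun x => ∫ y, v (x - y) ∂ν) p μ ≤ eLpNorm v p μ := by
  have hp0 : p ≠ 0 := (one_pos.trans_le hp).ne'
  have hr : 0 < p.toReal := ENNReal.toReal_pos hp0 hp_top
  set r := p.toReal
  have pointwise (x : G) : ‖∫ y, v (x - y) ∂ν‖ₑ ^ r ≤ ∫⁻ y, ‖v (x - y)‖ₑ ^ r ∂ν := by
    have hmeas : AEStronglyMeasurable (fun y => v (x - y)) ν :=
      (hv.comp_measurable (measurable_const.sub measurable_id)).aestronglyMeasurable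
    -- Jensen for the probability measure `ν`, in the form `‖·‖_{L¹(ν)} ≤ ‖·‖_{Lᵖ(ν)}`.
    have h := (enorm_integral_le_lintegral_enorm _).trans
      ((eLpNorm_one_eq_lintegral_enorm (f := fun y => v (x - y))).symm.trans_le
        (eLpNorm_le_eLpNorm_of_exponent_le hp hmeas))
    rw [eLpNorm_eq_lintegral_rpow_enorm_toReal hp0 hp_top] at h
    calc _ ≤ ((∫⁻ y, ‖v (x - y)‖ₑ ^ r ∂ν) ^ (1 / r)) ^ r := ENNReal.rpow_le_rpow h hr.le
      _ = _ := by rw [← ENNReal.rpow_mul, one_div_mul_cancel hr.ne', ENNReal.rpow_one]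
  have hvr : Measurable fun x => ‖v x‖ₑ ^ r := hv.enorm.pow_const r
  have integrated : ∫⁻ x, ‖∫ y, v (x - y) ∂ν‖ₑ ^ r ∂μ ≤ ∫⁻ x, ‖v x‖ₑ ^ r ∂μ :=
    calc _ ≤ ∫⁻ x, ∫⁻ y, ‖v (x - y)‖ₑ ^ r ∂ν ∂μ := lintegral_mono pointwise
      _ = ∫⁻ y, ∫⁻ x, ‖v (x - y)‖ₑ ^ r ∂μ ∂ν :=
        lintegral_lintegral_swap (hvr.comp measurable_sub).aemeasurable
      _ = ∫⁻ x, ‖v x‖ₑ ^ r ∂μ := by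
        simp only [lintegral_sub_right_eq_self (fun x => ‖v x‖ₑ ^ r), lintegral_const,
          measure_univ, mul_one]
  simp only [eLpNorm_eq_lintegral_rpow_enorm_toReal hp0 hp_top]
  exact ENNReal.rpow_le_rpow integrated (by positivity)

end TranslationAverage

lemma hasDerivAt_setIntegral_Iic {g : ℝ → ℝ} (hg : Continuous g)
    (hint : ∀ u, IntegrableOn g (Iic u)) (a : ℝ) :
    HasDerivAt (fun u => ∫ t in Iic u, g t) (g a) a := by
  have split (u : ℝ) : ∫ t in Iic u, g t = (∫ t in Iic 0, g t) + ∫ t in (0)..u, g t := by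
    rw [← intervalIntegral.integral_Iic_sub_Iic (hint 0) (hint u)]; ring
  rw [funext split]
  exact (intervalIntegral.integral_hasDerivAt_right (hg.intervalIntegrable 0 a)
    hg.aestronglyMeasurable.stronglyMeasurableAtFilter hg.continuousAt).const_add _

lemma integrableOn_exp_mul_Iic_of_memLp_two {v : ℝ → ℝ} (hv : MemLp v 2) (a : ℝ) :
    IntegrableOn (fun t => exp t * v t) (Iic a) := by
  have hexp : MemLp exp 2 (volume.restrict (Iic a)) := by
    refine (memLp_two_iff_integrable_sq continuous_exp.aestronglyMeasurable).2 ?_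
    simpa [← exp_nat_mul, IntegrableOn] using integrableOn_exp_mul_Iic two_pos a
  exact hexp.integrable_mul (hv.restrict _)

section IntegrationByParts

variable {f g f' g' : ℝ → ℝ}

lemma integral_deriv_mul_eq_neg_integral_mul_deriv_of_memLp_two
    (hf : ∀ x, HasDerivAt f (f' x) x) (hg : ∀ x, HasDerivAt g (g' x) x)
    (hf2 : MemLp f 2) (hf'2 : MemLp f' 2) (hg2 : MemLp g 2) (hg'2 : MemLp g' 2) :
    ∫ x, f' x * g x = -∫ x, f x * g' x := by
  rw [integral_mul_deriv_eq_deriv_mul_of_integrable (fun x _ => hf x) (fun x _ => hg x)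
    (hf2.integrable_mul hg'2) (hf'2.integrable_mul hg2) (hf2.integrable_mul hg2), neg_neg]

lemma integral_mul_deriv_eq_zero_of_memLp_two (hf : ∀ x, HasDerivAt f (f' x) x)
    (hf2 : MemLp f 2) (hf'2 : MemLp f' 2) : ∫ x, f x * f' x = 0 := by
  have h := integral_deriv_mul_eq_neg_integral_mul_deriv_of_memLp_two hf hf hf2 hf'2 hf2 hf'2
  simp only [mul_comm (f' _)] at h
  linarith

end IntegrationByParts

lemma integral_deriv_mul_sub_eq_integral_mul_self {v v' w : ℝ → ℝ} (hv : ∀ x, HasDerivAt v (v' x) x)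
    (hw : ∀ x, HasDerivAt w (v x - w x) x)
    (hv2 : MemLp v 2) (hv'2 : MemLp v' 2) (hw2 : MemLp w 2) :
    ∫ x, v' x * (v x - w x) = ∫ x, (v x - w x) * (v x - w x) := by
  have hu2 : MemLp (fun x => v x - w x) 2 := hv2.sub hw2
  have hvv' : ∫ x, v' x * v x = 0 := by
    simpa only [mul_comm] using integral_mul_deriv_eq_zero_of_memLp_two hv hv2 hv'2
  have hww' : ∫ x, w x * (v x - w x) = 0 := integral_mul_deriv_eq_zero_of_memLp_two hw hw2 hu2
  have hv'w : ∫ x, v' x * w x = -∫ x, v x * (v x - w x) :=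
    integral_deriv_mul_eq_neg_integral_mul_deriv_of_memLp_two hv hw hv2 hv'2 hw2 hu2
  calc ∫ x, v' x * (v x - w x) = (∫ x, v' x * v x) - ∫ x, v' x * w x := by
        simp only [mul_sub]; exact integral_sub (hv'2.integrable_mul hv2) (hv'2.integrable_mul hw2)
    _ = (∫ x, v x * (v x - w x)) - ∫ x, w x * (v x - w x) := by rw [hvv', hv'w, hww']; ring
    _ = ∫ x, (v x - w x) * (v x - w x) := by
        simp only [sub_mul]
        exact (integral_sub (hv2.integrable_mul hu2) (hw2.integrable_mul hu2)).symm

lemma norm_sub_le_of_inner_eq_norm_sq {H : Type*} [NormedAddCommGroup H] [InnerProductSpace ℝ H]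
    {x y : H} (h : inner ℝ x y = ‖y‖ ^ 2) : ‖x - y‖ ≤ ‖x‖ := by
  have hsq : ‖x - y‖ ^ 2 = ‖x‖ ^ 2 - ‖y‖ ^ 2 := by rw [norm_sub_sq_real, h]; ring
  nlinarith [norm_nonneg (x - y), norm_nonneg x, sq_nonneg ‖y‖]

lemma eLpNorm_sub_le_of_integral_mul_eq {α : Type*} [MeasurableSpace α] {μ : Measure α}
    {f g : α → ℝ} (hf : MemLp f 2 μ) (hg : MemLp g 2 μ)
    (h : ∫ x, f x * g x ∂μ = ∫ x, g x * g x ∂μ) : eLpNorm (f - g) 2 μ ≤ eLpNorm f 2 μ := by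
  have inner_toLp {f₁ f₂ : α → ℝ} (h₁ : MemLp f₁ 2 μ) (h₂ : MemLp f₂ 2 μ) :
      inner ℝ (h₁.toLp f₁) (h₂.toLp f₂) = ∫ x, f₁ x * f₂ x ∂μ := by
    rw [L2.inner_def]
    refine integral_congr_ae ?_
    filter_upwards [h₁.coeFn_toLp, h₂.coeFn_toLp] with x hx₁ hx₂
    rw [hx₁, hx₂, real_inner_eq_re_inner, RCLike.inner_apply, conj_trivial, mul_comm]; rfl
  have hnorm := norm_sub_le_of_inner_eq_norm_sq (x := hf.toLp f) (y := hg.toLp g)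
    (by rw [← real_inner_self_eq_norm_sq, inner_toLp, inner_toLp, h])
  rwa [← MemLp.toLp_sub, Lp.norm_toLp, Lp.norm_toLp,
    ENNReal.toReal_le_toReal (hf.sub hg).eLpNorm_ne_top hf.eLpNorm_ne_top] at hnorm

noncomputable def expKernel (z : ℝ) : ℝ := if 0 < z then exp (-z) else 0

lemma expKernel_nonneg (z : ℝ) : 0 ≤ expKernel z := by
  unfold expKernel; split_ifs <;> positivity

lemma expKernel_eq_indicator : expKernel = (Ioi 0).indicator fun z => exp (-z) := by
  ext z; simp [expKernel, indicator]

lemma measurable_expKernel : Measurable expKernel := by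
  rw [expKernel_eq_indicator]
  exact (measurable_neg.exp).indicator measurableSet_Ioi

lemma lintegral_ofReal_expKernel : ∫⁻ z, ENNReal.ofReal (expKernel z) = 1 := by
  have hint : IntegrableOn (fun z : ℝ => exp (-z)) (Ioi 0) := by
    simpa using exp_neg_integrableOn_Ioi 0 one_pos
  rw [← ofReal_integral_eq_lintegral_ofReal _ (.of_forall expKernel_nonneg),
    expKernel_eq_indicator, integral_indicator measurableSet_Ioi, integral_exp_neg_Ioi_zero,
    ENNReal.ofReal_one]
  exact hint.integrable_indicator measurableSet_Ioi

instance isProbabilityMeasure_withDensity_expKernel :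
    IsProbabilityMeasure (volume.withDensity fun z => ENNReal.ofReal (expKernel z)) :=
  ⟨by rw [withDensity_apply _ MeasurableSet.univ, Measure.restrict_univ,
    lintegral_ofReal_expKernel]⟩

lemma integral_expKernel_mul_eq_integral_withDensity (g : ℝ → ℝ) :
    ∫ y, expKernel y * g y =
      ∫ y, g y ∂volume.withDensity fun z => ENNReal.ofReal (expKernel z) := by
  rw [integral_withDensity_eq_integral_toReal_smul measurable_expKernel.ennreal_ofReal
    (.of_forall fun _ => ENNReal.ofReal_lt_top)]
  simp only [ENNReal.toReal_ofReal (expKernel_nonneg _), smul_eq_mul]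

lemma integral_expKernel_mul_sub (v : ℝ → ℝ) (x : ℝ) :
    ∫ y, expKernel y * v (x - y) = exp (-x) * ∫ t in Iic x, exp t * v t := by
  rw [← integral_sub_left_eq_self _ volume x, integral_Iic_eq_integral_Iio,
    ← integral_const_mul, ← integral_indicator measurableSet_Iio]
  congr 1 with t
  by_cases ht : t < x
  · simp [expKernel, ht, indicator, sub_eq_neg_add, exp_add]; ring
  · simp [expKernel, ht, indicator]

lemma hasDerivAt_integral_expKernel_mul_sub {v : ℝ → ℝ} (hv : Continuous v) (hv2 : MemLp v 2)
    (x : ℝ) : HasDerivAt (fun x => ∫ y, expKernel y * v (x - y))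
      (v x - ∫ y, expKernel y * v (x - y)) x := by
  simp only [integral_expKernel_mul_sub]
  refine ((hasDerivAt_neg x).exp.mul (hasDerivAt_setIntegral_Iic (g := fun t => exp t * v t)
    (continuous_exp.mul hv) (integrableOn_exp_mul_Iic_of_memLp_two hv2) x)).congr_deriv ?_
  rw [← mul_assoc, ← exp_add, neg_add_cancel, exp_zero]
  ring

lemma eLpNorm_integral_expKernel_mul_sub_le {v : ℝ → ℝ} (hv : StronglyMeasurable v)
    {p : ℝ≥0∞} (hp : 1 ≤ p) (hp_top : p ≠ ∞) :
    eLpNorm (fun x => ∫ y, expKernel y * v (x - y)) p volume ≤ eLpNorm v p volume := by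
  simp only [integral_expKernel_mul_eq_integral_withDensity]
  exact eLpNorm_integral_comp_sub_le _ hp hp_top hv

/-- For the kernel `K(z) = e^{-z} 1_{z>0}` and `v` differentiable with `v, v' ∈ L²(ℝ)`,
the function `K*v - v + v'` belongs to `L²(ℝ)` and its `L²` norm is bounded by that
of `v'`. -/
theorem memL2_and_norm_le_of_nonlocal_operator
    (K : ℝ → ℝ) (hK : ∀ z : ℝ, K z = if 0 < z then Real.exp (-z) else 0)
    (v : ℝ → ℝ) (hv : Differentiable ℝ v)
    (hv2 : MemLp v 2 (volume : Measure ℝ))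
    (hv'2 : MemLp (deriv v) 2 (volume : Measure ℝ)) :
    MemLp (fun x : ℝ => (∫ y : ℝ, K y * v (x - y)) - v x + deriv v x) 2
        (volume : Measure ℝ) ∧
      eLpNorm (fun x : ℝ => (∫ y : ℝ, K y * v (x - y)) - v x + deriv v x) 2
          (volume : Measure ℝ)
        ≤ eLpNorm (deriv v) 2 (volume : Measure ℝ) := by
  obtain rfl : K = expKernel := funext hK
  set w : ℝ → ℝ := fun x => ∫ y, expKernel y * v (x - y)
  have hw : ∀ x, HasDerivAt w (v x - w x) x :=
    hasDerivAt_integral_expKernel_mul_sub hv.continuous hv2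
  have hw2 : MemLp w 2 := by
    refine ⟨(continuous_iff_continuousAt.2 fun x => (hw x).continuousAt).aestronglyMeasurable,
      (eLpNorm_integral_expKernel_mul_sub_le hv.continuous.stronglyMeasurable one_le_two
        ENNReal.ofNat_ne_top).trans_lt hv2.eLpNorm_lt_top⟩
  have hu2 : MemLp (fun x => v x - w x) 2 := hv2.sub hw2
  have hT : (fun x => w x - v x + deriv v x) = deriv v - fun x => v x - w x := by
    ext x; simp only [Pi.sub_apply]; ring
  rw [hT]
  exact ⟨hv'2.sub hu2, eLpNorm_sub_le_of_integral_mul_eq hv'2 hu2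
    (integral_deriv_mul_sub_eq_integral_mul_self (fun x => (hv x).hasDerivAt) hw hv2 hv'2 hw2)⟩
end

section
/- Let J : ℝ → [0,∞) be a measurable, even function with ∫_ℝ J(z) z² dz < ∞, and let φ : ℝ → ℝ be differentiable at every point with derivative φ' ∈ L²(ℝ). Then ∫_ℝ ∫_ℝ J(x−y) (φ(x) − φ(y))² dx dy ≤ (∫_ℝ J(z) z² dz) · ∫_ℝ φ'(x)² dx. -/
/-!
By the fundamental theorem of calculus and Cauchy–Schwarz on the interval between `x - z` and `x`,
`|φ x - φ (x - z)|² ≤ |z| ∫_{x-z}^{x} |φ'|²`; integrating in `x` and using translation invariance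
gives `∫ |φ x - φ (x - z)|² dx ≤ z² ∫ |φ'|²`. Substituting `y = x - z` and applying Tonelli turns
the double integral into `∫ J z (∫ |φ x - φ (x - z)|² dx) dz`, which is then bounded termwise.
-/

open MeasureTheory Set
open scoped ENNReal Interval

theorem sq_lintegral_le_measure_univ_mul_lintegral_sq {α : Type*} [MeasurableSpace α]
    {μ : Measure α} {g : α → ℝ≥0∞} (hg : AEMeasurable g μ) :
    (∫⁻ x, g x ∂μ) ^ 2 ≤ μ univ * ∫⁻ x, g x ^ 2 ∂μ := by
  have hpq : (2 : ℝ).HolderConjugate 2 := Real.HolderConjugate.two_two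
  have := ENNReal.lintegral_mul_le_Lp_mul_Lq μ hpq hg aemeasurable_const (g := fun _ ↦ 1)
  simp only [Pi.mul_apply, mul_one, ENNReal.one_rpow, lintegral_one] at this
  calc (∫⁻ x, g x ∂μ) ^ 2
      ≤ ((∫⁻ x, g x ^ (2 : ℝ) ∂μ) ^ (1 / 2 : ℝ) * μ univ ^ (1 / 2 : ℝ)) ^ 2 :=
        pow_le_pow_left₀ zero_le this 2
    _ = μ univ * ∫⁻ x, g x ^ 2 ∂μ := by
        simp only [mul_pow, ← ENNReal.rpow_natCast, ← ENNReal.rpow_mul]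
        norm_num [mul_comm]

theorem lintegral_setLIntegral_add_eq_measure_mul {G : Type*} [MeasurableSpace G] [AddGroup G]
    [MeasurableAdd₂ G] {μ : Measure G} [SFinite μ] [μ.IsAddRightInvariant]
    {g : G → ℝ≥0∞} (hg : Measurable g) (S : Set G) :
    ∫⁻ x, ∫⁻ s in S, g (x + s) ∂μ ∂μ = μ S * ∫⁻ x, g x ∂μ := by
  rw [lintegral_lintegral_swap (by fun_prop)]
  simp_rw [lintegral_add_right_eq_self g, setLIntegral_const, mul_comm]

section Derivative

variable {E : Type*} [NormedAddCommGroup E] [NormedSpace ℝ E] [CompleteSpace E]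

theorem enorm_sub_le_setLIntegral_enorm_deriv {φ : ℝ → E} (hφ : Differentiable ℝ φ) (a b : ℝ) :
    ‖φ b - φ a‖ₑ ≤ ∫⁻ t in Ι a b, ‖deriv φ t‖ₑ := by
  by_cases hfin : ∫⁻ t in Ι a b, ‖deriv φ t‖ₑ = ∞
  · simp [hfin]
  have hint : IntervalIntegrable (deriv φ) volume a b :=
    intervalIntegrable_iff.2 ⟨aestronglyMeasurable_deriv φ _, lt_top_iff_ne_top.2 hfin⟩
  rw [← intervalIntegral.integral_deriv_eq_sub (fun t _ ↦ hφ t) hint, ← ofReal_norm,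
    intervalIntegral.norm_integral_eq_norm_integral_uIoc, ofReal_norm]
  exact enorm_integral_le_lintegral_enorm _

theorem enorm_sub_sq_le_mul_setLIntegral_enorm_deriv_sq {φ : ℝ → E} (hφ : Differentiable ℝ φ)
    (a b : ℝ) :
    ‖φ b - φ a‖ₑ ^ 2 ≤ ‖b - a‖ₑ * ∫⁻ t in Ι a b, ‖deriv φ t‖ₑ ^ 2 := by
  calc ‖φ b - φ a‖ₑ ^ 2 ≤ (∫⁻ t in Ι a b, ‖deriv φ t‖ₑ) ^ 2 :=
        pow_le_pow_left₀ zero_le (enorm_sub_le_setLIntegral_enorm_deriv hφ a b) 2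
    _ ≤ ‖b - a‖ₑ * ∫⁻ t in Ι a b, ‖deriv φ t‖ₑ ^ 2 := by
        simpa [Real.volume_uIoc, Real.enorm_eq_ofReal_abs] using
          sq_lintegral_le_measure_univ_mul_lintegral_sq
            (aestronglyMeasurable_deriv φ (volume.restrict (Ι a b))).enorm

theorem lintegral_enorm_sub_sub_sq_le {φ : ℝ → E} (hφ : Differentiable ℝ φ) (z : ℝ) :
    ∫⁻ x, ‖φ x - φ (x - z)‖ₑ ^ 2 ≤ ‖z‖ₑ ^ 2 * ∫⁻ x, ‖deriv φ x‖ₑ ^ 2 := by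
  have hpt (x : ℝ) :
      ‖φ x - φ (x - z)‖ₑ ^ 2 ≤ ‖z‖ₑ * ∫⁻ s in Ι (-z) 0, ‖deriv φ (x + s)‖ₑ ^ 2 := by
    simpa [Function.comp_def, deriv_comp_const_add, sub_eq_add_neg] using
      enorm_sub_sq_le_mul_setLIntegral_enorm_deriv_sq
        (hφ.comp (differentiable_id.const_add x)) (-z) 0
  have hmeas : Measurable fun x ↦ ‖deriv φ x‖ₑ ^ 2 :=
    (stronglyMeasurable_deriv φ).enorm.pow_const 2
  calc ∫⁻ x, ‖φ x - φ (x - z)‖ₑ ^ 2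
      ≤ ∫⁻ x, ‖z‖ₑ * ∫⁻ s in Ι (-z) 0, ‖deriv φ (x + s)‖ₑ ^ 2 := lintegral_mono hpt
    _ = ‖z‖ₑ * (volume (Ι (-z) 0) * ∫⁻ x, ‖deriv φ x‖ₑ ^ 2) := by
        rw [lintegral_const_mul' _ _ enorm_ne_top,
          lintegral_setLIntegral_add_eq_measure_mul hmeas]
    _ = ‖z‖ₑ ^ 2 * ∫⁻ x, ‖deriv φ x‖ₑ ^ 2 := by
        rw [Real.volume_uIoc, ← mul_assoc, sq]
        simp [Real.enorm_eq_ofReal_abs]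

end Derivative

theorem ofReal_sq_eq_enorm_sq (x : ℝ) : ENNReal.ofReal (x ^ 2) = ‖x‖ₑ ^ 2 := by
  rw [Real.enorm_eq_ofReal_abs, ← ENNReal.ofReal_pow (abs_nonneg x), sq_abs]

theorem double_integral_kernel_le_second_moment_mul_deriv_sq_general
    (J : ℝ → ℝ) (hJmeas : Measurable J)
    (φ : ℝ → ℝ) (hφ : Differentiable ℝ φ) :
    (∫⁻ x : ℝ, ∫⁻ y : ℝ, ENNReal.ofReal (J (x - y) * (φ x - φ y) ^ 2))
      ≤ (∫⁻ z : ℝ, ENNReal.ofReal (J z * z ^ 2))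
          * ∫⁻ x : ℝ, ENNReal.ofReal (deriv φ x ^ 2) := by
  have hφm : Measurable φ := hφ.continuous.measurable
  simp_rw [ENNReal.ofReal_mul' (sq_nonneg _), ofReal_sq_eq_enorm_sq]
  calc ∫⁻ x, ∫⁻ y, ENNReal.ofReal (J (x - y)) * ‖φ x - φ y‖ₑ ^ 2
      = ∫⁻ x, ∫⁻ z, ENNReal.ofReal (J z) * ‖φ x - φ (x - z)‖ₑ ^ 2 :=
        lintegral_congr fun x ↦ by rw [← lintegral_sub_left_eq_self _ x]; simp
    _ = ∫⁻ z, ENNReal.ofReal (J z) * ∫⁻ x, ‖φ x - φ (x - z)‖ₑ ^ 2 := by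
        rw [lintegral_lintegral_swap (by fun_prop)]
        simp_rw [lintegral_const_mul' _ _ ENNReal.ofReal_ne_top]
    _ ≤ ∫⁻ z, ENNReal.ofReal (J z) * (‖z‖ₑ ^ 2 * ∫⁻ x, ‖deriv φ x‖ₑ ^ 2) := by
        gcongr with z
        exact lintegral_enorm_sub_sub_sq_le hφ z
    _ = (∫⁻ z, ENNReal.ofReal (J z) * ‖z‖ₑ ^ 2) * ∫⁻ x, ‖deriv φ x‖ₑ ^ 2 := by
        simp_rw [← mul_assoc]
        exact lintegral_mul_const _ (by fun_prop)

/-- For a nonnegative, measurable, even kernel `J` with finite second moment and a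
differentiable `φ` with `φ' ∈ L²(ℝ)`,
`∫∫ J(x-y)(φ(x)-φ(y))² dx dy ≤ (∫ J(z) z² dz) ∫ φ'(x)² dx`. -/
theorem double_integral_kernel_le_second_moment_mul_deriv_sq
    (J : ℝ → ℝ) (hJmeas : Measurable J) (hJnonneg : ∀ z, 0 ≤ J z)
    (hJeven : ∀ z, J (-z) = J z)
    (hJmom : (∫⁻ z : ℝ, ENNReal.ofReal (J z * z ^ 2)) < ⊤)
    (φ : ℝ → ℝ) (hφ : Differentiable ℝ φ)
    (hφ' : MemLp (deriv φ) 2 (volume : Measure ℝ)) :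
    (∫⁻ x : ℝ, ∫⁻ y : ℝ, ENNReal.ofReal (J (x - y) * (φ x - φ y) ^ 2))
      ≤ (∫⁻ z : ℝ, ENNReal.ofReal (J z * z ^ 2))
          * ∫⁻ x : ℝ, ENNReal.ofReal (deriv φ x ^ 2) :=
  double_integral_kernel_le_second_moment_mul_deriv_sq_general J hJmeas φ hφ
end

section
/- Let K : ℝ → [0,∞) be integrable with ∫_ℝ K(z) dz = 1, let p ≥ 2 be a real number, and let u : ℝ → [0,∞) be measurable with u ∈ L¹(ℝ) ∩ L^∞(ℝ). Then ∫_ℝ ∫_ℝ K(x−y) u(y) u(x)^{p−1} dx dy ≤ (2/p) ∫_ℝ ∫_ℝ K(x−y) u(y)^{p/2} u(x)^{p/2} dx dy + (1 − 2/p) ∫_ℝ u(x)^p dx. -/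
/-!
Weighted AM–GM with weights `2/p` and `1 - 2/p` gives, for `a, b ≥ 0`,
`a b^{p-1} = (a^{p/2} b^{p/2})^{2/p} (b^p)^{1-2/p} ≤ (2/p) a^{p/2} b^{p/2} + (1 - 2/p) b^p`.
Take `a = u(y)`, `b = u(x)`, multiply by `K(x-y) ≥ 0` and integrate in `y` and then in `x`;
since `K` has mass one, the last term integrates in `y` to `u(x)^p`.
Boundedness of `u` is what makes the right-hand side integrable: `u^r ∈ L¹` for `r ≥ 1`, and
`x ↦ (K ⋆ u^{p/2})(x) u(x)^{p/2}` is an `L¹` function times an `L^∞` one.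
-/

open MeasureTheory
open scoped Convolution

lemma Real.mul_rpow_sub_one_le {p a b : ℝ} (hp : 2 ≤ p) (ha : 0 ≤ a) (hb : 0 ≤ b) :
    a * b ^ (p - 1) ≤ 2 / p * (a ^ (p / 2) * b ^ (p / 2)) + (1 - 2 / p) * b ^ p := by
  have hp0 : 0 < p := by linarith
  have amgm := Real.geom_mean_le_arith_mean2_weighted (w₁ := 2 / p) (w₂ := 1 - 2 / p)
    (p₁ := a ^ (p / 2) * b ^ (p / 2)) (p₂ := b ^ p) (by positivity)
    (by rw [sub_nonneg, div_le_one hp0]; exact hp) (by positivity) (by positivity) (by ring)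
  have h₁ : (a ^ (p / 2) * b ^ (p / 2)) ^ (2 / p) = a * b := by
    rw [Real.mul_rpow (by positivity) (by positivity), ← Real.rpow_mul ha, ← Real.rpow_mul hb,
      show p / 2 * (2 / p) = 1 by field_simp, Real.rpow_one, Real.rpow_one]
  have h₂ : (b ^ p) ^ (1 - 2 / p) = b ^ (p - 2) := by
    rw [← Real.rpow_mul hb]; congr 1; field_simp
  have h₃ : a * b * b ^ (p - 2) = a * b ^ (p - 1) := by
    rw [mul_assoc, ← Real.rpow_one_add' hb (by linarith)]; ring_nf
  rwa [h₁, h₂, h₃] at amgm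

namespace MeasureTheory

section Powers

variable {α : Type*} {m : MeasurableSpace α} {μ : Measure α} {u : α → ℝ}

lemma MemLp.rpow_of_nonneg (hu : MemLp u ⊤ μ) (hu0 : ∀ x, 0 ≤ u x) {r : ℝ} (hr : 0 ≤ r) :
    MemLp (fun x => u x ^ r) ⊤ μ := by
  simpa [ENNReal.top_div_of_ne_top ENNReal.ofReal_ne_top, ENNReal.toReal_ofReal hr,
    Real.norm_of_nonneg (hu0 _)] using hu.norm_rpow_div (ENNReal.ofReal r)

lemma Integrable.rpow_of_memLp_top (hu1 : Integrable u μ) (hu : MemLp u ⊤ μ)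
    (hu0 : ∀ x, 0 ≤ u x) {r : ℝ} (hr : 1 ≤ r) : Integrable (fun x => u x ^ r) μ := by
  have h := hu1.mul_of_top_left (hu.rpow_of_nonneg hu0 (sub_nonneg.2 hr))
  refine h.congr (.of_forall fun x => ?_)
  simp only [Pi.mul_apply]
  rw [← Real.rpow_one_add' (hu0 x) (by linarith), add_sub_cancel]

end Powers

section Kernel

variable {G : Type*} [MeasurableSpace G] [AddCommGroup G] [MeasurableAdd₂ G] [MeasurableNeg G]
  {μ : Measure G} [μ.IsAddLeftInvariant] {K w : G → ℝ}

lemma integrable_kernel_mul [μ.IsNegInvariant] (hK : Integrable K μ) (hw : MemLp w ⊤ μ) (x : G) :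
    Integrable (fun y => K (x - y) * w y) μ :=
  (hK.comp_sub_left x).mul_of_top_left hw

lemma integrable_integral_kernel_mul_mul [SFinite μ] (hK : Integrable K μ) (hw1 : Integrable w μ)
    (hw : MemLp w ⊤ μ) : Integrable (fun x => ∫ y, K (x - y) * w y * w x ∂μ) μ := by
  have hconv : w ⋆[ContinuousLinearMap.mul ℝ ℝ, μ] K = fun x => ∫ y, K (x - y) * w y ∂μ := by
    ext x; simp [convolution_def, mul_comm]
  have h := (hw1.integrable_convolution (ContinuousLinearMap.mul ℝ ℝ) hK).mul_of_top_right hw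
  rw [hconv] at h
  refine h.congr (.of_forall fun x => ?_)
  simp only [Pi.mul_apply]
  rw [← integral_const_mul]
  simp only [mul_comm (w x)]

lemma integral_kernel_mul_rpow_sub_one_le [μ.IsNegInvariant] (hK : Integrable K μ)
    (hK0 : ∀ z, 0 ≤ K z) (hK1 : ∫ z, K z ∂μ = 1) {p : ℝ} (hp : 2 ≤ p) {u : G → ℝ}
    (hu0 : ∀ x, 0 ≤ u x) (hv : MemLp (fun y => u y ^ (p / 2)) ⊤ μ) (x : G) :
    ∫ y, K (x - y) * u y * u x ^ (p - 1) ∂μ ≤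
      2 / p * ∫ y, K (x - y) * u y ^ (p / 2) * u x ^ (p / 2) ∂μ + (1 - 2 / p) * u x ^ p := by
  have hI₁ : Integrable (fun y => K (x - y) * u y ^ (p / 2) * u x ^ (p / 2)) μ :=
    (integrable_kernel_mul hK hv x).mul_const _
  have hI₂ : Integrable (fun y => K (x - y) * u x ^ p) μ := (hK.comp_sub_left x).mul_const _
  calc ∫ y, K (x - y) * u y * u x ^ (p - 1) ∂μ
      ≤ ∫ y, (2 / p * (K (x - y) * u y ^ (p / 2) * u x ^ (p / 2))
          + (1 - 2 / p) * (K (x - y) * u x ^ p)) ∂μ := by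
        refine integral_mono_of_nonneg
          (.of_forall fun y =>
            mul_nonneg (mul_nonneg (hK0 _) (hu0 y)) (Real.rpow_nonneg (hu0 x) _))
          ((hI₁.const_mul _).add (hI₂.const_mul _)) (.of_forall fun y => ?_)
        linear_combination
          mul_le_mul_of_nonneg_left (Real.mul_rpow_sub_one_le hp (hu0 y) (hu0 x)) (hK0 (x - y))
    _ = 2 / p * ∫ y, K (x - y) * u y ^ (p / 2) * u x ^ (p / 2) ∂μ + (1 - 2 / p) * u x ^ p := by
        rw [integral_add (hI₁.const_mul _) (hI₂.const_mul _), integral_const_mul,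
          integral_const_mul, integral_mul_const (u x ^ p), integral_sub_left_eq_self K μ x, hK1,
          one_mul]

end Kernel

end MeasureTheory

theorem double_integral_kernel_power_le_general
    (K : ℝ → ℝ) (hKint : Integrable K) (hKnonneg : ∀ z, 0 ≤ K z)
    (hKmass : ∫ z : ℝ, K z = 1)
    (p : ℝ) (hp : 2 ≤ p)
    (u : ℝ → ℝ) (hunonneg : ∀ x, 0 ≤ u x)
    (hu1 : Integrable u) (huinf : MemLp u ⊤ (volume : Measure ℝ)) :
    (∫ x : ℝ, ∫ y : ℝ, K (x - y) * u y * u x ^ (p - 1))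
      ≤ (2 / p) * (∫ x : ℝ, ∫ y : ℝ, K (x - y) * u y ^ (p / 2) * u x ^ (p / 2))
          + (1 - 2 / p) * ∫ x : ℝ, u x ^ p := by
  have hv : MemLp (fun x => u x ^ (p / 2)) ⊤ volume :=
    huinf.rpow_of_nonneg hunonneg (by linarith)
  have hI₁ : Integrable (fun x => ∫ y, K (x - y) * u y ^ (p / 2) * u x ^ (p / 2)) :=
    integrable_integral_kernel_mul_mul hKint
      (hu1.rpow_of_memLp_top huinf hunonneg (by linarith)) hv
  have hI₂ : Integrable (fun x => u x ^ p) := hu1.rpow_of_memLp_top huinf hunonneg (by linarith)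
  calc (∫ x, ∫ y, K (x - y) * u y * u x ^ (p - 1))
      ≤ ∫ x, (2 / p * ∫ y, K (x - y) * u y ^ (p / 2) * u x ^ (p / 2)) + (1 - 2 / p) * u x ^ p :=
        integral_mono_of_nonneg
          (.of_forall fun x => integral_nonneg fun y =>
            mul_nonneg (mul_nonneg (hKnonneg _) (hunonneg y)) (Real.rpow_nonneg (hunonneg x) _))
          ((hI₁.const_mul _).add (hI₂.const_mul _))
          (.of_forall (integral_kernel_mul_rpow_sub_one_le hKint hKnonneg hKmass hp hunonneg hv))
    _ = _ := by
        rw [integral_add (hI₁.const_mul _) (hI₂.const_mul _), integral_const_mul,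
          integral_const_mul]

/-- For an integrable nonnegative kernel `K` of mass one, a real `p ≥ 2` and a nonnegative
`u ∈ L¹(ℝ) ∩ L^∞(ℝ)`:
`∫∫ K(x-y) u(y) u(x)^{p-1} ≤ (2/p) ∫∫ K(x-y) u(y)^{p/2} u(x)^{p/2} + (1-2/p) ∫ u^p`. -/
theorem double_integral_kernel_power_le
    (K : ℝ → ℝ) (hKint : Integrable K) (hKnonneg : ∀ z, 0 ≤ K z)
    (hKmass : ∫ z : ℝ, K z = 1)
    (p : ℝ) (hp : 2 ≤ p)
    (u : ℝ → ℝ) (hum : Measurable u) (hunonneg : ∀ x, 0 ≤ u x)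
    (hu1 : Integrable u) (huinf : MemLp u ⊤ (volume : Measure ℝ)) :
    (∫ x : ℝ, ∫ y : ℝ, K (x - y) * u y * u x ^ (p - 1))
      ≤ (2 / p) * (∫ x : ℝ, ∫ y : ℝ, K (x - y) * u y ^ (p / 2) * u x ^ (p / 2))
          + (1 - 2 / p) * ∫ x : ℝ, u x ^ p :=
  double_integral_kernel_power_le_general K hKint hKnonneg hKmass p hp u hunonneg hu1 huinf
end

section
/- Let K : ℝ → [0,∞) be integrable with ∫_ℝ K(z) dz = 1, set J(z) = (K(z) + K(−z))/2, let p ≥ 2 be a real number, and let u : ℝ → [0,∞) be measurable with u ∈ L¹(ℝ) ∩ L^∞(ℝ). Then ∫_ℝ ((K*u)(x) − u(x)) u(x)^{p−1} dx ≤ −(1/p) ∫_ℝ ∫_ℝ J(x−y) (u(x)^{p/2} − u(y)^{p/2})² dx dy. -/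
open MeasureTheory

/-!
For `a, b ≥ 0` the tangent-line inequality for the convex function `t ↦ t ^ (p / 2)` gives
`p (b - a) a ^ (p - 1) ≤ b ^ p - a ^ p - (a ^ (p / 2) - b ^ (p / 2)) ^ 2`.
Put `a = u x`, `b = u y`, weight by `K (x - y)` and integrate over `(x, y)`. Since `K` has mass
one, the left side integrates to `p ∫ (K * u - u) u ^ (p - 1)`, while `b ^ p` and `a ^ p` both
integrate to `∫ u ^ p` and cancel. The square is symmetric in `(x, y)`, so `K (x - y)` may be
replaced by its symmetrization `J (x - y)`. Boundedness of `u` makes every term integrable on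
the product.
-/

theorem rpow_add_mul_rpow_sub_one_mul_sub_le {s a b : ℝ} (hs : 1 ≤ s) (ha : 0 ≤ a)
    (hb : 0 ≤ b) : a ^ s + s * a ^ (s - 1) * (b - a) ≤ b ^ s := by
  have hs0 : 0 < s := by linarith
  have amgm := Real.geom_mean_le_arith_mean2_weighted (w₁ := (s - 1) / s) (w₂ := 1 / s)
    (by have := sub_nonneg.2 hs; positivity) (by positivity) (Real.rpow_nonneg ha s)
    (Real.rpow_nonneg hb s) (by field_simp; ring)
  rw [← Real.rpow_mul ha, ← Real.rpow_mul hb, mul_div_cancel₀ _ hs0.ne',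
    mul_one_div_cancel hs0.ne', Real.rpow_one] at amgm
  have hpow : a ^ (s - 1) * a = a ^ s := by
    rw [← Real.rpow_add_one' ha (by linarith), sub_add_cancel]
  have := mul_le_mul_of_nonneg_left amgm hs0.le
  field_simp at this
  nlinarith

theorem sq_rpow_half {a : ℝ} (ha : 0 ≤ a) (p : ℝ) : (a ^ (p / 2)) ^ 2 = a ^ p := by
  rw [← Real.rpow_mul_natCast ha]
  norm_num

theorem sub_mul_rpow_sub_one_le {p a b : ℝ} (hp : 2 ≤ p) (ha : 0 ≤ a) (hb : 0 ≤ b) :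
    (b - a) * a ^ (p - 1) ≤ (b ^ p - a ^ p - (a ^ (p / 2) - b ^ (p / 2)) ^ 2) / p := by
  have tangent := rpow_add_mul_rpow_sub_one_mul_sub_le (s := p / 2) (by linarith) ha hb
  have hsplit : a ^ (p - 1) = a ^ (p / 2 - 1) * a ^ (p / 2) := by
    rw [← Real.rpow_add' ha (by linarith)]
    ring_nf
  rw [le_div_iff₀ (by linarith), hsplit, ← sq_rpow_half ha p, ← sq_rpow_half hb p]
  nlinarith [Real.rpow_nonneg ha (p / 2)]

theorem rpow_add_rpow_le_mul_add {p a b M : ℝ} (hp : 1 ≤ p) (ha : 0 ≤ a) (haM : a ≤ M)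
    (hb : 0 ≤ b) (hbM : b ≤ M) : a ^ p + b ^ p ≤ M ^ (p - 1) * (a + b) := by
  have key : ∀ {c : ℝ}, 0 ≤ c → c ≤ M → c ^ p ≤ M ^ (p - 1) * c := fun {c} hc hcM =>
    calc _ = c ^ (p - 1) * c := by rw [← Real.rpow_add_one' hc (by linarith), sub_add_cancel]
      _ ≤ M ^ (p - 1) * c := by gcongr
  rw [mul_add]
  exact add_le_add (key ha haM) (key hb hbM)

theorem abs_sub_mul_rpow_sub_one_le {p a b M : ℝ} (hp : 1 ≤ p) (ha : 0 ≤ a) (haM : a ≤ M)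
    (hb : 0 ≤ b) : |(b - a) * a ^ (p - 1)| ≤ M ^ (p - 1) * (a + b) := by
  rw [abs_mul, abs_of_nonneg (Real.rpow_nonneg ha _), mul_comm]
  exact mul_le_mul (Real.rpow_le_rpow ha haM (by linarith)) (abs_sub_le_iff.2 ⟨by linarith,
    by linarith⟩) (abs_nonneg _) (Real.rpow_nonneg (ha.trans haM) _)

theorem integral_integral_symmetrize {α : Type*} [MeasurableSpace α] {μ : Measure α} [SFinite μ]
    {k D : α → α → ℝ} (hD : ∀ x y, D x y = D y x)
    (hkD : Integrable (fun q : α × α => k q.1 q.2 * D q.1 q.2) (μ.prod μ)) :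
    ∫ x, ∫ y, (k x y + k y x) / 2 * D x y ∂μ ∂μ = ∫ q, k q.1 q.2 * D q.1 q.2 ∂μ.prod μ := by
  have hswap : (fun q : α × α => k q.2 q.1 * D q.1 q.2) =
      fun q => (fun q : α × α => k q.1 q.2 * D q.1 q.2) q.swap := by
    ext q
    rw [hD]
    rfl
  have hkD' : Integrable (fun q : α × α => k q.2 q.1 * D q.1 q.2) (μ.prod μ) := by
    rw [hswap]
    exact hkD.swap
  have hsum : Integrable (fun q : α × α => (k q.1 q.2 * D q.1 q.2 + k q.2 q.1 * D q.1 q.2) / 2)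
      (μ.prod μ) := (hkD.add hkD').div_const 2
  calc ∫ x, ∫ y, (k x y + k y x) / 2 * D x y ∂μ ∂μ
      = ∫ q, (k q.1 q.2 * D q.1 q.2 + k q.2 q.1 * D q.1 q.2) / 2 ∂μ.prod μ := by
        rw [integral_prod _ hsum]
        simp only [add_mul, div_mul_eq_mul_div]
    _ = ∫ q, k q.1 q.2 * D q.1 q.2 ∂μ.prod μ := by
        rw [integral_div, integral_add hkD hkD', hswap,
          integral_prod_swap fun q : α × α => k q.1 q.2 * D q.1 q.2]
        ring

section KernelOnGroup

variable {G : Type*} [AddCommGroup G] [MeasurableSpace G] [MeasurableAdd₂ G] [MeasurableNeg G]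
  {μ : Measure G} [μ.IsAddLeftInvariant]

theorem integral_prod_kernel_mul_snd [SFinite μ] (K f : G → ℝ) :
    ∫ q, K (q.1 - q.2) * f q.2 ∂μ.prod μ = (∫ x, K x ∂μ) * ∫ x, f x ∂μ := by
  have hshear : MeasurableEmbedding (fun z : G × G => (z.1 - z.2, z.2)) :=
    MeasurableEmbedding.of_measurable_inverse (g := fun z : G × G => (z.1 + z.2, z.2))
      (by fun_prop)
      (by rw [Set.range_eq_univ.2 fun z => ⟨(z.1 + z.2, z.2), by simp⟩]; exact .univ)
      (by fun_prop) fun z => by simp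
  rw [← integral_prod_mul,
    ← (measurePreserving_sub_prod μ μ).integral_comp hshear (fun z => K z.1 * f z.2)]

variable [μ.IsNegInvariant]

theorem conv_sub_self_mul_eq_integral {K u : G → ℝ} (hK : Integrable K μ)
    (hKmass : ∫ z, K z ∂μ = 1) {x : G} (hKu : Integrable (fun y => K (x - y) * u y) μ) (c : ℝ) :
    ((∫ y, K y * u (x - y) ∂μ) - u x) * c = ∫ y, K (x - y) * ((u y - u x) * c) ∂μ := by
  have hconv : ∫ y, K y * u (x - y) ∂μ = ∫ y, K (x - y) * u y ∂μ := by
    simpa using (integral_sub_left_eq_self (fun y => K y * u (x - y)) μ x).symm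
  have hmass : ∫ y, K (x - y) ∂μ = 1 := by rw [integral_sub_left_eq_self K μ x, hKmass]
  simp_rw [mul_sub_right_distrib, mul_sub_left_distrib, ← mul_assoc]
  rw [integral_sub (hKu.mul_const c) (((hK.comp_sub_left x).mul_const _).mul_const c),
    integral_mul_const, integral_mul_const, integral_mul_const, hconv, hmass, one_mul]

variable [SFinite μ]

theorem integral_prod_kernel_mul_fst (K f : G → ℝ) :
    ∫ q, K (q.1 - q.2) * f q.1 ∂μ.prod μ = (∫ x, K x ∂μ) * ∫ x, f x ∂μ := by
  rw [← integral_prod_swap, ← integral_neg_eq_self K μ, ← integral_prod_kernel_mul_snd]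
  simp [neg_sub]

theorem integral_conv_sub_self_mul_eq_integral_prod {K u w : G → ℝ} (hK : Integrable K μ)
    (hKmass : ∫ z, K z ∂μ = 1) (hu : Integrable u μ)
    (hKuw : Integrable (fun q : G × G => K (q.1 - q.2) * ((u q.2 - u q.1) * w q.1)) (μ.prod μ)) :
    ∫ x, ((∫ y, K y * u (x - y) ∂μ) - u x) * w x ∂μ
      = ∫ q, K (q.1 - q.2) * ((u q.2 - u q.1) * w q.1) ∂μ.prod μ := by
  rw [integral_prod _ hKuw]
  refine integral_congr_ae ?_
  have hKu : Integrable (fun q : G × G => K (q.1 - q.2) * u q.2) (μ.prod μ) := by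
    simpa [mul_comm] using hu.convolution_integrand (ContinuousLinearMap.mul ℝ ℝ) hK
  filter_upwards [hKu.prod_right_ae] with x hx
  exact conv_sub_self_mul_eq_integral hK hKmass hx _

theorem integrable_prod_kernel_mul {K u : G → ℝ} (hK : Integrable K μ) (hu : Integrable u μ)
    (hum : Measurable u) (hu0 : ∀ x, 0 ≤ u x) {M : ℝ} (huM : ∀ᵐ x ∂μ, u x ≤ M)
    {φ : ℝ → ℝ → ℝ} (hφ : Measurable (Function.uncurry φ)) {C : ℝ}
    (hφC : ∀ a b, 0 ≤ a → a ≤ M → 0 ≤ b → b ≤ M → |φ a b| ≤ C * (a + b)) :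
    Integrable (fun q : G × G => K (q.1 - q.2) * φ (u q.1) (u q.2)) (μ.prod μ) := by
  have hright : Integrable (fun q : G × G => ‖K (q.1 - q.2)‖ * u q.2) (μ.prod μ) := by
    simpa [mul_comm] using hu.convolution_integrand (ContinuousLinearMap.mul ℝ ℝ) hK.norm
  have hleft : Integrable (fun q : G × G => ‖K (q.1 - q.2)‖ * u q.1) (μ.prod μ) := by
    simpa [Function.comp_def, mul_comm] using
      (hu.convolution_integrand (ContinuousLinearMap.mul ℝ ℝ) hK.norm.comp_neg).swap
  have hmeas : AEStronglyMeasurable (fun q : G × G => K (q.1 - q.2) * φ (u q.1) (u q.2))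
      (μ.prod μ) :=
    (hK.1.comp_quasiMeasurePreserving (quasiMeasurePreserving_sub_of_right_invariant μ μ)).mul
      (hφ.comp ((hum.comp measurable_fst).prodMk (hum.comp measurable_snd))).aestronglyMeasurable
  refine ((hleft.add hright).const_mul C).mono' hmeas ?_
  filter_upwards [Measure.quasiMeasurePreserving_fst.ae huM,
    Measure.quasiMeasurePreserving_snd.ae huM] with q hq1 hq2
  rw [norm_mul, Real.norm_eq_abs (φ _ _)]
  calc ‖K (q.1 - q.2)‖ * |φ (u q.1) (u q.2)|
      ≤ ‖K (q.1 - q.2)‖ * (C * (u q.1 + u q.2)) :=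
        mul_le_mul_of_nonneg_left (hφC _ _ (hu0 _) hq1 (hu0 _) hq2) (norm_nonneg _)
    _ = C * (‖K (q.1 - q.2)‖ * u q.1 + ‖K (q.1 - q.2)‖ * u q.2) := by ring

theorem integral_conv_sub_self_mul_rpow_le {K u : G → ℝ} (hK : Integrable K μ)
    (hK0 : ∀ z, 0 ≤ K z) (hKmass : ∫ z, K z ∂μ = 1) {p : ℝ} (hp : 2 ≤ p)
    (hum : Measurable u) (hu0 : ∀ x, 0 ≤ u x) (hu : Integrable u μ) {M : ℝ}
    (huM : ∀ᵐ x ∂μ, u x ≤ M) :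
    ∫ x, ((∫ y, K y * u (x - y) ∂μ) - u x) * u x ^ (p - 1) ∂μ
      ≤ -(1 / p) * ∫ x, ∫ y, (K (x - y) + K (-(x - y))) / 2 *
          (u x ^ (p / 2) - u y ^ (p / 2)) ^ 2 ∂μ ∂μ := by
  have hp1 : 1 ≤ p := by linarith
  have hF := integrable_prod_kernel_mul hK hu hum hu0 huM
    (φ := fun a b => (b - a) * a ^ (p - 1)) (C := M ^ (p - 1)) (by fun_prop)
    fun a b ha haM hb _ => abs_sub_mul_rpow_sub_one_le hp1 ha haM hb
  have hP1 := integrable_prod_kernel_mul hK hu hum hu0 huM (φ := fun _ b => b ^ p)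
    (C := M ^ (p - 1)) (by fun_prop) fun a b ha haM hb hbM => by
      rw [abs_of_nonneg (Real.rpow_nonneg hb _)]
      linarith [rpow_add_rpow_le_mul_add hp1 ha haM hb hbM, Real.rpow_nonneg ha p]
  have hP2 := integrable_prod_kernel_mul hK hu hum hu0 huM (φ := fun a _ => a ^ p)
    (C := M ^ (p - 1)) (by fun_prop) fun a b ha haM hb hbM => by
      rw [abs_of_nonneg (Real.rpow_nonneg ha _)]
      linarith [rpow_add_rpow_le_mul_add hp1 ha haM hb hbM, Real.rpow_nonneg hb p]
  have hD := integrable_prod_kernel_mul hK hu hum hu0 huM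
    (φ := fun a b => (a ^ (p / 2) - b ^ (p / 2)) ^ 2) (C := M ^ (p - 1)) (by fun_prop)
    fun a b ha haM hb hbM => by
      rw [abs_of_nonneg (sq_nonneg _)]
      nlinarith [rpow_add_rpow_le_mul_add hp1 ha haM hb hbM, sq_rpow_half ha p,
        sq_rpow_half hb p, mul_nonneg (Real.rpow_nonneg ha (p / 2)) (Real.rpow_nonneg hb (p / 2))]
  have hP12 : Integrable (fun q : G × G => K (q.1 - q.2) * u q.2 ^ p - K (q.1 - q.2) * u q.1 ^ p)
      (μ.prod μ) := hP1.sub hP2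
  simp_rw [neg_sub]
  rw [integral_integral_symmetrize (k := fun x y => K (x - y)) (fun x y => by ring) hD,
    integral_conv_sub_self_mul_eq_integral_prod hK hKmass hu hF]
  calc ∫ q, K (q.1 - q.2) * ((u q.2 - u q.1) * u q.1 ^ (p - 1)) ∂μ.prod μ
      ≤ ∫ q, (K (q.1 - q.2) * u q.2 ^ p - K (q.1 - q.2) * u q.1 ^ p
          - K (q.1 - q.2) * (u q.1 ^ (p / 2) - u q.2 ^ (p / 2)) ^ 2) / p ∂μ.prod μ := by
        refine integral_mono hF ((hP12.sub hD).div_const p) fun q => ?_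
        simp only [← mul_sub, mul_div_assoc]
        exact mul_le_mul_of_nonneg_left (sub_mul_rpow_sub_one_le hp (hu0 _) (hu0 _)) (hK0 _)
    _ = -(1 / p) * ∫ q, K (q.1 - q.2) * (u q.1 ^ (p / 2) - u q.2 ^ (p / 2)) ^ 2 ∂μ.prod μ := by
        rw [integral_div, integral_sub hP12 hD, integral_sub hP1 hP2,
          integral_prod_kernel_mul_snd K (u · ^ p), integral_prod_kernel_mul_fst K (u · ^ p)]
        ring

end KernelOnGroup

/-- Dissipation inequality: for an integrable nonnegative kernel `K` of mass one with
symmetrization `J(z) = (K(z)+K(-z))/2`, a real `p ≥ 2` and a nonnegative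
`u ∈ L¹(ℝ) ∩ L^∞(ℝ)`:
`∫ (K*u - u) u^{p-1} ≤ -(1/p) ∫∫ J(x-y)(u(x)^{p/2} - u(y)^{p/2})² dx dy`. -/
theorem integral_conv_sub_self_mul_power_le
    (K : ℝ → ℝ) (hKint : Integrable K) (hKnonneg : ∀ z, 0 ≤ K z)
    (hKmass : ∫ z : ℝ, K z = 1)
    (J : ℝ → ℝ) (hJ : ∀ z, J z = (K z + K (-z)) / 2)
    (p : ℝ) (hp : 2 ≤ p)
    (u : ℝ → ℝ) (hum : Measurable u) (hunonneg : ∀ x, 0 ≤ u x)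
    (hu1 : Integrable u) (huinf : MemLp u ⊤ (volume : Measure ℝ)) :
    (∫ x : ℝ, ((∫ y : ℝ, K y * u (x - y)) - u x) * u x ^ (p - 1))
      ≤ -(1 / p) * ∫ x : ℝ, ∫ y : ℝ, J (x - y) * (u x ^ (p / 2) - u y ^ (p / 2)) ^ 2 := by
  obtain ⟨M, huM⟩ : ∃ M, ∀ᵐ x ∂volume, u x ≤ M :=
    ⟨_, (ae_le_lpNorm_exponent_top huinf).mono fun x hx => (le_abs_self _).trans hx⟩
  simp_rw [hJ]
  exact integral_conv_sub_self_mul_rpow_le hKint hKnonneg hKmass hp hum hunonneg hu1 huM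
end

section
/- Let K(z) = e^{-z} for z > 0 and K(z) = 0 for z ≤ 0, and for λ > 0 set K_λ(z) = λK(λz) and K̃_λ(z) = K_λ(−z). Let φ : ℝ → ℝ be three times differentiable with bounded third derivative. Then for every λ > 0 and every x ∈ ℝ: |λ²((K̃_λ*φ)(x) − φ(x)) − λφ'(x) − φ''(x)| ≤ (1/λ) · sup_{y∈ℝ} |φ'''(y)|. -/
/-!
The substitution `y = -t` turns the convolution into `∫_0^∞ λ e^{-λt} φ(x + t) dt`, an average
against the exponential law, whose moments are `∫_0^∞ λ e^{-λt} tⁿ dt = n!/λⁿ`. Inserting the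
second order Taylor expansion of `φ` at `x`, the constant, linear and quadratic terms give exactly
`φ(x) + φ'(x)/λ + φ''(x)/λ²`, so the left-hand side equals `λ³ ∫_0^∞ e^{-λt} R(t) dt` for the
Taylor remainder `R`. Since `|R(t)| ≤ M t³/6` with `M = sup |φ'''|`, the third moment `6/λ⁴` yields
the bound `M/λ`.
-/

open MeasureTheory Set Real

lemma abs_le_of_abs_deriv_le_pow {f f' : ℝ → ℝ} {C : ℝ} {k : ℕ}
    (hf : ∀ t, HasDerivAt f (f' t) t) (h0 : f 0 = 0)
    (hbound : ∀ t, 0 ≤ t → |f' t| ≤ C * t ^ k) {t : ℝ} (ht : 0 ≤ t) :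
    |f t| ≤ C * t ^ (k + 1) / (k + 1) := by
  have hB (s : ℝ) : HasDerivAt (fun s => C * s ^ (k + 1) / (k + 1)) (C * s ^ k) s :=
    ((hasDerivAt_pow (k + 1) s).const_mul C).div_const ((k : ℝ) + 1) |>.congr_deriv (by
      push_cast
      field_simp)
  exact image_norm_le_of_norm_deriv_right_le_deriv_boundary
    (fun s _ => (hf s).continuousAt.continuousWithinAt) (fun s _ => (hf s).hasDerivWithinAt)
    (by simp [h0]) hB (fun s hs => hbound s hs.1) ⟨ht, le_rfl⟩

lemma abs_sub_taylor_two_le {f f' f'' f''' : ℝ → ℝ} {M : ℝ}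
    (hf : ∀ y, HasDerivAt f (f' y) y) (hf' : ∀ y, HasDerivAt f' (f'' y) y)
    (hf'' : ∀ y, HasDerivAt f'' (f''' y) y) (hM : ∀ y, |f''' y| ≤ M) (x : ℝ) {t : ℝ}
    (ht : 0 ≤ t) :
    |f (x + t) - (f x + f' x * t + f'' x / 2 * t ^ 2)| ≤ M / 6 * t ^ 3 := by
  have hrem'' (s : ℝ) (hs : 0 ≤ s) : |f'' (x + s) - f'' x| ≤ M * s ^ 1 := by
    refine abs_le_of_abs_deriv_le_pow (f' := fun s => f''' (x + s)) (C := M) (k := 0)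
      (fun s => ((hf'' (x + s)).comp_const_add x s).sub_const _) (by simp)
      (fun s _ => by simpa using hM (x + s)) hs |>.trans_eq ?_
    ring
  have hrem' (s : ℝ) (hs : 0 ≤ s) : |f' (x + s) - (f' x + f'' x * s)| ≤ M / 2 * s ^ 2 := by
    refine abs_le_of_abs_deriv_le_pow (f' := fun s => f'' (x + s) - f'' x)
      (fun s => ((hf' (x + s)).comp_const_add x s).sub (((hasDerivAt_id s).const_mul (f'' x)
        |>.const_add (f' x))) |>.congr_deriv (by simp)) (by simp) hrem'' hs |>.trans_eq ?_
    ring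
  refine abs_le_of_abs_deriv_le_pow (f' := fun s => f' (x + s) - (f' x + f'' x * s))
    (fun s => ((hf (x + s)).comp_const_add x s).sub
      ((((hasDerivAt_id s).const_mul (f' x)).const_add (f x)).add
        ((hasDerivAt_pow 2 s).const_mul (f'' x / 2))) |>.congr_deriv (by
          simp only [mul_one, Nat.cast_ofNat, Nat.add_one_sub_one, pow_one]
          ring))
    (by simp) hrem' ht |>.trans_eq ?_
  push_cast
  ring

lemma integral_pow_mul_exp_neg_mul_Ioi {r : ℝ} (hr : 0 < r) (n : ℕ) :
    ∫ t in Ioi (0 : ℝ), t ^ n * exp (-(r * t)) = n.factorial / r ^ (n + 1) := by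
  have h := integral_rpow_mul_exp_neg_mul_Ioi (a := (n : ℝ) + 1) (by positivity) hr
  rw [add_sub_cancel_right, Gamma_nat_eq_factorial, div_rpow zero_le_one hr.le, one_rpow,
    ← Nat.cast_add_one, rpow_natCast] at h
  simp only [rpow_natCast] at h
  rw [h, one_div_mul_eq_div]

lemma integrableOn_pow_mul_exp_neg_mul_Ioi {r : ℝ} (hr : 0 < r) (n : ℕ) :
    IntegrableOn (fun t => t ^ n * exp (-(r * t))) (Ioi 0) := by
  simpa [rpow_natCast] using
    integrableOn_rpow_mul_exp_neg_mul_rpow (s := n) (p := 1) (by linarith [n.cast_nonneg (α := ℝ)])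
      one_pos hr

lemma norm_exp_neg_mul_mul_le_of_abs_le_pow {r C t : ℝ} {n : ℕ} {f : ℝ → ℝ}
    (hf : |f t| ≤ C * t ^ n) : ‖exp (-(r * t)) * f t‖ ≤ C * (t ^ n * exp (-(r * t))) := by
  rw [norm_mul, norm_of_nonneg (exp_pos _).le, Real.norm_eq_abs, mul_comm, ← mul_assoc]
  exact mul_le_mul_of_nonneg_right hf (exp_pos _).le

lemma integrableOn_exp_neg_mul_mul_of_abs_le_pow {r C : ℝ} (hr : 0 < r) {n : ℕ} {f : ℝ → ℝ}
    (hmeas : AEStronglyMeasurable f (volume.restrict (Ioi 0)))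
    (hf : ∀ t, 0 ≤ t → |f t| ≤ C * t ^ n) :
    IntegrableOn (fun t => exp (-(r * t)) * f t) (Ioi 0) := by
  refine ((integrableOn_pow_mul_exp_neg_mul_Ioi hr n).const_mul C).mono'
    ((continuous_exp.comp (continuous_const.mul continuous_id).neg).aestronglyMeasurable.mul hmeas)
    ?_
  filter_upwards [self_mem_ae_restrict measurableSet_Ioi] with t ht
  exact norm_exp_neg_mul_mul_le_of_abs_le_pow (hf t ht.le)

lemma abs_setIntegral_exp_neg_mul_mul_le_of_abs_le_pow {r C : ℝ} (hr : 0 < r) {n : ℕ} {f : ℝ → ℝ}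
    (hf : ∀ t, 0 ≤ t → |f t| ≤ C * t ^ n) :
    |∫ t in Ioi 0, exp (-(r * t)) * f t| ≤ C * (n.factorial / r ^ (n + 1)) := by
  rw [← Real.norm_eq_abs, ← integral_pow_mul_exp_neg_mul_Ioi hr, ← integral_const_mul]
  refine norm_integral_le_of_norm_le ((integrableOn_pow_mul_exp_neg_mul_Ioi hr n).const_mul C) ?_
  filter_upwards [self_mem_ae_restrict measurableSet_Ioi] with t ht
  exact norm_exp_neg_mul_mul_le_of_abs_le_pow (hf t ht.le)

lemma integrableOn_exp_neg_mul_mul_quadratic {r : ℝ} (hr : 0 < r) (a b c : ℝ) :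
    IntegrableOn (fun t => exp (-(r * t)) * (a + b * t + c * t ^ 2)) (Ioi 0) := by
  have hint (d : ℝ) (n : ℕ) := (integrableOn_pow_mul_exp_neg_mul_Ioi hr n).const_mul d
  exact IntegrableOn.congr_fun (((hint a 0).add (hint b 1)).add (hint c 2))
    (fun t _ => by simp only [Pi.add_apply]; ring) measurableSet_Ioi

lemma setIntegral_exp_neg_mul_mul_quadratic {r : ℝ} (hr : 0 < r) (a b c : ℝ) :
    ∫ t in Ioi 0, exp (-(r * t)) * (a + b * t + c * t ^ 2) = a / r + b / r ^ 2 + 2 * c / r ^ 3 := by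
  have hint (d : ℝ) (n : ℕ) := (integrableOn_pow_mul_exp_neg_mul_Ioi hr n).const_mul d
  have hsplit : (fun t => exp (-(r * t)) * (a + b * t + c * t ^ 2)) =
      fun t => a * (t ^ 0 * exp (-(r * t))) + b * (t ^ 1 * exp (-(r * t)))
        + c * (t ^ 2 * exp (-(r * t))) := by
    ext t; ring
  rw [hsplit, integral_add (by exact (hint a 0).add (hint b 1)) (hint c 2),
    integral_add (hint a 0) (hint b 1)]
  simp only [integral_const_mul, integral_pow_mul_exp_neg_mul_Ioi hr]
  simp only [Nat.factorial_zero, Nat.factorial_one, Nat.factorial_two]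
  field_simp
  ring

lemma setIntegral_exp_kernel_mul_eq_quadratic_add_remainder {r : ℝ} (hr : 0 < r) (a b c : ℝ)
    {g : ℝ → ℝ}
    (hg : IntegrableOn (fun t => exp (-(r * t)) * (g t - (a + b * t + c * t ^ 2))) (Ioi 0)) :
    ∫ t in Ioi 0, r * exp (-(r * t)) * g t
      = a + b / r + 2 * c / r ^ 2
        + r * ∫ t in Ioi 0, exp (-(r * t)) * (g t - (a + b * t + c * t ^ 2)) := by
  calc ∫ t in Ioi 0, r * exp (-(r * t)) * g t
      = r * ∫ t in Ioi 0, exp (-(r * t)) * (a + b * t + c * t ^ 2)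
          + exp (-(r * t)) * (g t - (a + b * t + c * t ^ 2)) := by
        rw [← integral_const_mul]
        congr 1 with t
        ring
    _ = _ := by
        rw [integral_add (integrableOn_exp_neg_mul_mul_quadratic hr a b c) hg,
          setIntegral_exp_neg_mul_mul_quadratic hr]
        field_simp

lemma integral_exp_kernel_mul_eq_setIntegral_Ioi {r : ℝ} (hr : 0 < r) (g : ℝ → ℝ) :
    ∫ t, r * (if 0 < r * t then exp (-(r * t)) else 0) * g t
      = ∫ t in Ioi 0, r * exp (-(r * t)) * g t := by
  rw [← integral_indicator measurableSet_Ioi]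
  congr 1 with t
  by_cases ht : 0 < t
  · simp [ht, mul_pos hr ht]
  · simp [ht, (mul_pos_iff_of_pos_left hr).not.2 ht]

/-- For the reflected rescaled kernel `K̃_λ(z) = K_λ(-z)` of `K(z) = e^{-z} 1_{z>0}` and a
three times differentiable `φ` with bounded third derivative,
`|λ²((K̃_λ*φ)(x) - φ(x)) - λφ'(x) - φ''(x)| ≤ (1/λ) sup_y |φ'''(y)|`
for all `λ > 0` and `x ∈ ℝ`. -/
theorem abs_reflected_rescaled_nonlocal_operator_le_sup_third_deriv
    (K : ℝ → ℝ) (hK : ∀ z : ℝ, K z = if 0 < z then Real.exp (-z) else 0)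
    (Kl : ℝ → ℝ → ℝ) (hKl : ∀ lam z : ℝ, Kl lam z = lam * K (lam * z))
    (Klt : ℝ → ℝ → ℝ) (hKlt : ∀ lam z : ℝ, Klt lam z = Kl lam (-z))
    (φ : ℝ → ℝ) (hφ : Differentiable ℝ φ) (hφ' : Differentiable ℝ (deriv φ))
    (hφ'' : Differentiable ℝ (deriv (deriv φ)))
    (hbdd : BddAbove (Set.range fun y : ℝ => |deriv (deriv (deriv φ)) y|))
    (lam : ℝ) (hlam : 0 < lam) (x : ℝ) :
    |lam ^ 2 * ((∫ y : ℝ, Klt lam y * φ (x - y)) - φ x) - lam * deriv φ x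
        - deriv (deriv φ) x|
      ≤ (1 / lam) * ⨆ y : ℝ, |deriv (deriv (deriv φ)) y| := by
  set M := ⨆ y : ℝ, |deriv (deriv (deriv φ)) y|
  set R : ℝ → ℝ := fun t => φ (x + t) - (φ x + deriv φ x * t + deriv (deriv φ) x / 2 * t ^ 2)
  have hR (t : ℝ) (ht : 0 ≤ t) : |R t| ≤ M / 6 * t ^ 3 :=
    abs_sub_taylor_two_le (fun y => (hφ y).hasDerivAt) (fun y => (hφ' y).hasDerivAt)
      (fun y => (hφ'' y).hasDerivAt) (le_ciSup hbdd) x ht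
  have hRint : IntegrableOn (fun t => exp (-(lam * t)) * R t) (Ioi 0) :=
    integrableOn_exp_neg_mul_mul_of_abs_le_pow hlam
      ((hφ.continuous.comp (continuous_const_add x)).sub (by fun_prop)).aestronglyMeasurable hR
  have hconv : ∫ y, Klt lam y * φ (x - y) = ∫ t in Ioi 0, lam * exp (-(lam * t)) * φ (x + t) := by
    rw [← integral_neg_eq_self, ← integral_exp_kernel_mul_eq_setIntegral_Ioi hlam]
    simp only [hKlt, hKl, hK, neg_neg, sub_neg_eq_add]
  rw [hconv, setIntegral_exp_kernel_mul_eq_quadratic_add_remainder hlam _ _ _ hRint]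
  set I := ∫ t in Ioi 0, exp (-(lam * t)) * R t
  calc _ = lam ^ 3 * |I| := by
        rw [← abs_of_pos (pow_pos hlam 3), ← abs_mul]
        congr 1
        field_simp
        ring
    _ ≤ lam ^ 3 * (M / 6 * (Nat.factorial 3 / lam ^ (3 + 1))) := by
        gcongr
        exact abs_setIntegral_exp_neg_mul_mul_le_of_abs_le_pow hlam hR
    _ = 1 / lam * M := by
        simp only [Nat.factorial_succ, Nat.factorial_zero]
        field_simp
        ring
end

section
/- Let K : ℝ → [0,∞) be integrable with ∫_ℝ K(z) dz = 1, and let w ∈ L¹(ℝ) be real-valued. Then ∫_ℝ ((K*w)(x) − w(x)) · sgn(w(x)) dx ≤ 0, where sgn(s) = 1 for s > 0, sgn(s) = −1 for s < 0, and sgn(0) = 0. -/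
/-! Pointwise, `(K ⋆ w - w) · sgn w ≤ |K ⋆ w| - |w| ≤ K ⋆ |w| - |w|` because `K ≥ 0`, and by Fubini
the right-hand side integrates to `(∫ K) (∫ |w|) - ∫ |w| = 0`. -/

open MeasureTheory Convolution ContinuousLinearMap

namespace Real

theorem measurable_sign : Measurable Real.sign :=
  Measurable.ite measurableSet_Iio measurable_const
    (Measurable.ite measurableSet_Ioi measurable_const measurable_const)

theorem abs_sign_le_one (r : ℝ) : |sign r| ≤ 1 := by
  rcases sign_apply_eq r with h | h | h <;> simp [h]

theorem self_mul_sign (r : ℝ) : r * sign r = |r| := by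
  rcases lt_trichotomy r 0 with h | rfl | h
  · rw [sign_of_neg h, abs_of_neg h, mul_neg_one]
  · simp
  · rw [sign_of_pos h, abs_of_pos h, mul_one]

theorem sub_mul_sign_le_abs_sub_abs (c a : ℝ) : (c - a) * sign a ≤ |c| - |a| := by
  rw [sub_mul, self_mul_sign]
  gcongr
  calc c * sign a ≤ |c * sign a| := le_abs_self _
    _ = |c| * |sign a| := abs_mul _ _
    _ ≤ |c| := mul_le_of_le_one_right (abs_nonneg c) (abs_sign_le_one a)

end Real

section Convolution

variable {G : Type*} [MeasurableSpace G] {μ : Measure G} {f g : G → ℝ}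

theorem abs_convolution_le_convolution_abs [Sub G] (hf : ∀ x, 0 ≤ f x) (x : G) :
    |(f ⋆[mul ℝ ℝ, μ] g) x| ≤ (f ⋆[mul ℝ ℝ, μ] fun y => |g y|) x := by
  simp only [convolution_mul]
  calc |∫ t, f t * g (x - t) ∂μ| ≤ ∫ t, |f t * g (x - t)| ∂μ :=
        abs_integral_le_integral_abs
    _ = ∫ t, f t * |g (x - t)| ∂μ := by simp_rw [abs_mul, abs_of_nonneg (hf _)]

variable [AddGroup G] [MeasurableAdd₂ G] [MeasurableNeg G] [SFinite μ] [μ.IsAddRightInvariant]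

theorem integral_convolution_mul (hf : Integrable f μ) (hg : Integrable g μ) :
    ∫ x, (f ⋆[mul ℝ ℝ, μ] g) x ∂μ = (∫ x, f x ∂μ) * ∫ x, g x ∂μ :=
  integral_convolution (mul ℝ ℝ) hf hg

theorem integral_convolution_sub_mul_sign_nonpos (hf : Integrable f μ) (hf_nonneg : ∀ x, 0 ≤ f x)
    (hf_mass : ∫ x, f x ∂μ = 1) (hg : Integrable g μ) :
    ∫ x, ((f ⋆[mul ℝ ℝ, μ] g) x - g x) * Real.sign (g x) ∂μ ≤ 0 := by
  have hg_abs : Integrable (fun x => |g x|) μ := hg.abs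
  have hconv_abs : Integrable (f ⋆[mul ℝ ℝ, μ] fun x => |g x|) μ :=
    hf.integrable_convolution _ hg_abs
  have hintegrable : Integrable (fun x => ((f ⋆[mul ℝ ℝ, μ] g) x - g x) * Real.sign (g x)) μ :=
    ((hf.integrable_convolution _ hg).sub hg).mul_bdd
      (Real.measurable_sign.comp_aemeasurable hg.aemeasurable).aestronglyMeasurable
      (.of_forall fun x => Real.abs_sign_le_one (g x))
  calc ∫ x, ((f ⋆[mul ℝ ℝ, μ] g) x - g x) * Real.sign (g x) ∂μ
      ≤ ∫ x, ((f ⋆[mul ℝ ℝ, μ] fun x => |g x|) x - |g x|) ∂μ := by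
        refine integral_mono hintegrable (hconv_abs.sub hg_abs) fun x => ?_
        exact (Real.sub_mul_sign_le_abs_sub_abs _ _).trans
          (sub_le_sub_right (abs_convolution_le_convolution_abs hf_nonneg x) _)
    _ = 0 := by
        rw [integral_sub hconv_abs hg_abs, integral_convolution_mul hf hg_abs, hf_mass, one_mul,
          sub_self]

end Convolution

/-- For an integrable nonnegative kernel `K` of mass one and real `w ∈ L¹(ℝ)`,
`∫ (K*w - w) sgn(w) ≤ 0`, where `sgn` is the usual sign function. -/
theorem integral_conv_sub_self_mul_sign_nonpos
    (K : ℝ → ℝ) (hKint : Integrable K) (hKnonneg : ∀ z, 0 ≤ K z)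
    (hKmass : ∫ z : ℝ, K z = 1)
    (w : ℝ → ℝ) (hw : Integrable w) :
    ∫ x : ℝ, ((∫ y : ℝ, K y * w (x - y)) - w x) * Real.sign (w x) ≤ 0 :=
  integral_convolution_sub_mul_sign_nonpos hKint hKnonneg hKmass hw
end

section
/- Let K : ℝ → [0,∞) be integrable with ∫_ℝ K(z) dz = 1, and let w ∈ L¹(ℝ) be real-valued. Then ∫_ℝ ((K*w)(x) − w(x)) · sgn⁺(w(x)) dx ≤ 0, where sgn⁺(s) = 1 for s > 0 and sgn⁺(s) = 0 for s ≤ 0. -/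
/-!
Since `K ≥ 0`, convolution with `K` is monotone, so `K * w ≤ K * w⁺` and `K * w⁺ ≥ 0`.
Hence `(K * w - w) sgn⁺(w) ≤ K * w⁺ - w⁺` almost everywhere (check the cases `w > 0` and `w ≤ 0`),
and the right-hand side has integral `(∫ K - 1) ∫ w⁺ = 0` because convolution multiplies
integrals.
-/

open MeasureTheory ContinuousLinearMap
open scoped Convolution

theorem sub_mul_ite_pos_le_sub_max {c c' s : ℝ} (hc : c ≤ c') (hc' : 0 ≤ c') :
    (c - s) * (if 0 < s then 1 else 0) ≤ c' - max s 0 := by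
  split_ifs with hs
  · rw [max_eq_left hs.le]; linarith
  · rw [max_eq_right (not_lt.mp hs)]; linarith

section Convolution

variable {G : Type*} [AddGroup G] [MeasurableSpace G] [MeasurableAdd₂ G] [MeasurableNeg G]
  {μ : Measure G} [SFinite μ] [μ.IsAddRightInvariant] {K f : G → ℝ}

theorem integral_convolution_sub_self_eq_zero (hK : Integrable K μ) (hKmass : ∫ z, K z ∂μ = 1)
    (hf : Integrable f μ) : ∫ x, (K ⋆[lsmul ℝ ℝ, μ] f) x - f x ∂μ = 0 := by
  rw [integral_sub (hK.integrable_convolution _ hf) hf, integral_convolution _ hK hf, hKmass,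
    lsmul_apply, one_smul, sub_self]

theorem ae_convolution_sub_self_mul_ite_pos_le (hK : Integrable K μ) (hKnonneg : ∀ z, 0 ≤ K z)
    (hf : Integrable f μ) :
    ∀ᵐ x ∂μ, ((K ⋆[lsmul ℝ ℝ, μ] f) x - f x) * (if 0 < f x then 1 else 0)
      ≤ (K ⋆[lsmul ℝ ℝ, μ] fun y ↦ max (f y) 0) x - max (f x) 0 := by
  filter_upwards [hK.ae_convolution_exists (lsmul ℝ ℝ) hf.pos_part] with x hx
  refine sub_mul_ite_pos_le_sub_max ?_ ?_
  · exact convolution_mono_right_of_nonneg hx hKnonneg (fun y ↦ le_max_left _ _)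
      (fun y ↦ le_max_right _ _)
  · exact integral_nonneg fun y ↦ mul_nonneg (hKnonneg y) (le_max_right _ _)

theorem MeasureTheory.Integrable.convolution_sub_self_mul_ite_pos (hK : Integrable K μ) (hf : Integrable f μ) :
    Integrable (fun x ↦ ((K ⋆[lsmul ℝ ℝ, μ] f) x - f x) * (if 0 < f x then 1 else 0)) μ := by
  have hsign : AEStronglyMeasurable (fun x ↦ if 0 < f x then (1 : ℝ) else 0) μ :=
    ((measurable_const.ite measurableSet_Ioi measurable_const).comp_aemeasurable
      hf.aemeasurable).aestronglyMeasurable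
  refine ((hK.integrable_convolution _ hf).sub hf).mul_bdd (c := 1) hsign ?_
  exact Filter.Eventually.of_forall fun x ↦ by split_ifs <;> simp

theorem integral_convolution_sub_self_mul_ite_pos_nonpos (hK : Integrable K μ)
    (hKnonneg : ∀ z, 0 ≤ K z) (hKmass : ∫ z, K z ∂μ = 1) (hf : Integrable f μ) :
    ∫ x, ((K ⋆[lsmul ℝ ℝ, μ] f) x - f x) * (if 0 < f x then 1 else 0) ∂μ ≤ 0 := by
  calc _ ≤ ∫ x, (K ⋆[lsmul ℝ ℝ, μ] fun y ↦ max (f y) 0) x - max (f x) 0 ∂μ :=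
        integral_mono_ae (hK.convolution_sub_self_mul_ite_pos hf)
          ((hK.integrable_convolution _ hf.pos_part).sub hf.pos_part)
          (ae_convolution_sub_self_mul_ite_pos_le hK hKnonneg hf)
    _ = 0 := integral_convolution_sub_self_eq_zero hK hKmass hf.pos_part

end Convolution

/-- For an integrable nonnegative kernel `K` of mass one and real `w ∈ L¹(ℝ)`,
`∫ (K*w - w) sgn⁺(w) ≤ 0`, where `sgn⁺(s) = 1` for `s > 0` and `sgn⁺(s) = 0` for `s ≤ 0`. -/
theorem integral_conv_sub_self_mul_sign_pos_nonpos
    (K : ℝ → ℝ) (hKint : Integrable K) (hKnonneg : ∀ z, 0 ≤ K z)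
    (hKmass : ∫ z : ℝ, K z = 1)
    (w : ℝ → ℝ) (hw : Integrable w) :
    ∫ x : ℝ, ((∫ y : ℝ, K y * w (x - y)) - w x)
        * (if 0 < w x then (1 : ℝ) else 0) ≤ 0 :=
  integral_convolution_sub_self_mul_ite_pos_nonpos hKint hKnonneg hKmass hw
end

section
/- Let K(z) = e^{-z} for z > 0 and K(z) = 0 for z ≤ 0. Let T > 0 and let u : [0,T] × ℝ → ℝ be a classical solution of the augmented Burgers equation ∂_t u = ∂_x(u²/2) + ∂_{xx} u + K*u − u + ∂_x u on [0,T] × ℝ, where u is continuous, the derivatives ∂_t u, ∂_x u, ∂_{xx} u exist and are continuous, and there is a constant C such that |u(t,x)| + |∂_t u(t,x)| + |∂_x u(t,x)| + |∂_{xx} u(t,x)| ≤ C/(1 + x²) for all (t,x) ∈ [0,T] × ℝ. Then for every t ∈ [0,T]: ‖u(t,·)‖_{L²(ℝ)} ≤ ‖u(0,·)‖_{L²(ℝ)}. -/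
open MeasureTheory Real Set Filter Topology
open scoped Convolution

/-!
Energy estimate. Multiplying the equation by `u` and integrating in `x`, the terms
`u² u_x + u u_x + u u_xx` integrate to `-∫ u_x²`, because `u³/3 + u²/2 + u u_x` vanishes at
infinity, while `∫ u (K * u) ≤ ∫ u²` because `K ≥ 0`, `∫ K = 1` and `2ab ≤ a² + b²` (then Fubini
and translation invariance). Hence `d/dt ∫ u² ≤ 0`; the decay `O(1/(1 + x²))`, uniform in `t`,
justifies differentiating under the integral.
-/

lemma memLp_two_div_one_add_sq (c : ℝ) : MemLp (fun x : ℝ => c / (1 + x ^ 2)) 2 := by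
  have hm : Measurable fun x : ℝ => c / (1 + x ^ 2) := by fun_prop
  refine (memLp_two_iff_integrable_sq hm.aestronglyMeasurable).2 <|
    (integrable_inv_one_add_sq.const_mul (c ^ 2)).mono' (hm.pow_const 2).aestronglyMeasurable
      (ae_of_all _ fun x => ?_)
  have h1 : 1 ≤ 1 + x ^ 2 := le_add_of_nonneg_right (sq_nonneg x)
  rw [norm_pow, Real.norm_eq_abs, sq_abs, div_pow, ← div_eq_mul_inv]
  exact div_le_div_of_nonneg_left (sq_nonneg c) (by positivity) (le_self_pow₀ h1 two_ne_zero)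

lemma tendsto_div_one_add_sq_cocompact (c : ℝ) :
    Tendsto (fun x : ℝ => c / (1 + x ^ 2)) (cocompact ℝ) (𝓝 0) := by
  refine tendsto_const_nhds.div_atTop (tendsto_atTop_add_const_left _ 1 ?_)
  simpa only [Function.comp_def, Real.norm_eq_abs, sq_abs] using
    (tendsto_pow_atTop two_ne_zero).comp (tendsto_norm_cocompact_atTop (E := ℝ))

lemma eLpNorm_two_le_of_integral_sq_le {α : Type*} [MeasurableSpace α] {μ : Measure α}
    {f g : α → ℝ} (hf : MemLp f 2 μ) (hg : MemLp g 2 μ)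
    (h : ∫ x, f x ^ 2 ∂μ ≤ ∫ x, g x ^ 2 ∂μ) : eLpNorm f 2 μ ≤ eLpNorm g 2 μ := by
  rw [hf.eLpNorm_eq_integral_rpow_norm two_ne_zero ENNReal.ofNat_ne_top,
    hg.eLpNorm_eq_integral_rpow_norm two_ne_zero ENNReal.ofNat_ne_top]
  simp only [ENNReal.toReal_ofNat, rpow_two, Real.norm_eq_abs, sq_abs]
  gcongr

lemma integrable_indicator_Ioi_exp_neg :
    Integrable ((Ioi (0 : ℝ)).indicator fun z => exp (-z)) :=
  (integrable_indicator_iff measurableSet_Ioi).2 (by simpa using exp_neg_integrableOn_Ioi 0 one_pos)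

lemma integral_indicator_Ioi_exp_neg : ∫ z, (Ioi (0 : ℝ)).indicator (fun z => exp (-z)) z = 1 := by
  rw [integral_indicator measurableSet_Ioi, integral_exp_neg_Ioi_zero]

lemma abs_mul_mul_le_of_nonneg {a b k : ℝ} (hk : 0 ≤ k) :
    |a * (k * b)| ≤ (a ^ 2 * k + b ^ 2 * k) / 2 := by
  rw [abs_mul, abs_mul, abs_of_nonneg hk]
  nlinarith [two_mul_le_add_sq |a| |b|, sq_abs a, sq_abs b]

section Convolution

variable {G : Type*} [MeasurableSpace G] [AddGroup G] {μ : Measure G} {K f : G → ℝ}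

lemma mul_convolution_eq_integral (x : G) :
    f x * (K ⋆[ContinuousLinearMap.lsmul ℝ ℝ, μ] f) x = ∫ y, f x * (K y * f (x - y)) ∂μ :=
  (integral_const_mul _ _).symm

variable [MeasurableAdd₂ G] [MeasurableNeg G] [SFinite μ] [μ.IsAddRightInvariant]

lemma integrable_prod_sq_sub_mul (hK : Integrable K μ) (hf2 : Integrable (fun x => f x ^ 2) μ) :
    Integrable (fun p : G × G => f (p.1 - p.2) ^ 2 * K p.2) (μ.prod μ) :=
  (measurePreserving_sub_prod μ μ).integrable_comp_of_integrable (hf2.mul_prod hK)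

lemma integral_prod_sq_sub_mul (hK : Integrable K μ) (hf2 : Integrable (fun x => f x ^ 2) μ) :
    ∫ p, f (p.1 - p.2) ^ 2 * K p.2 ∂(μ.prod μ) = (∫ x, f x ^ 2 ∂μ) * ∫ y, K y ∂μ := by
  have hmp := measurePreserving_sub_prod μ μ
  rw [← integral_prod_mul (fun x => f x ^ 2) K]
  conv_rhs => rw [← hmp.map_eq]
  exact (integral_map hmp.measurable.aemeasurable
    (hmp.map_eq ▸ (hf2.mul_prod hK).aestronglyMeasurable)).symm

lemma integrable_prod_mul_mul_sub (hK0 : ∀ y, 0 ≤ K y) (hK : Integrable K μ) (hf : Measurable f)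
    (hf2 : Integrable (fun x => f x ^ 2) μ) :
    Integrable (fun p : G × G => f p.1 * (K p.2 * f (p.1 - p.2))) (μ.prod μ) := by
  refine (((hf2.mul_prod hK).add (integrable_prod_sq_sub_mul hK hf2)).div_const 2).mono' ?_
    (ae_of_all _ fun p => abs_mul_mul_le_of_nonneg (hK0 p.2))
  exact (hf.comp measurable_fst).aestronglyMeasurable.mul
    (hK.aestronglyMeasurable.comp_snd.mul (hf.comp measurable_sub).aestronglyMeasurable)

lemma integrable_mul_convolution (hK0 : ∀ y, 0 ≤ K y) (hK : Integrable K μ) (hf : Measurable f)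
    (hf2 : Integrable (fun x => f x ^ 2) μ) :
    Integrable (fun x => f x * (K ⋆[ContinuousLinearMap.lsmul ℝ ℝ, μ] f) x) μ := by
  simpa only [mul_convolution_eq_integral] using
    (integrable_prod_mul_mul_sub hK0 hK hf hf2).integral_prod_left

lemma integral_mul_convolution_le_integral_sq (hK0 : ∀ y, 0 ≤ K y) (hK : Integrable K μ)
    (hK1 : ∫ y, K y ∂μ = 1) (hf : Measurable f) (hf2 : Integrable (fun x => f x ^ 2) μ) :
    ∫ x, f x * (K ⋆[ContinuousLinearMap.lsmul ℝ ℝ, μ] f) x ∂μ ≤ ∫ x, f x ^ 2 ∂μ := by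
  have h1 : Integrable (fun p : G × G => f p.1 ^ 2 * K p.2) (μ.prod μ) := hf2.mul_prod hK
  have h2 := integrable_prod_sq_sub_mul hK hf2
  calc ∫ x, f x * (K ⋆[ContinuousLinearMap.lsmul ℝ ℝ, μ] f) x ∂μ
      = ∫ p, f p.1 * (K p.2 * f (p.1 - p.2)) ∂(μ.prod μ) := by
        simp only [mul_convolution_eq_integral]
        exact (integral_prod _ (integrable_prod_mul_mul_sub hK0 hK hf hf2)).symm
    _ ≤ ∫ p, (f p.1 ^ 2 * K p.2 + f (p.1 - p.2) ^ 2 * K p.2) / 2 ∂(μ.prod μ) :=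
        integral_mono (integrable_prod_mul_mul_sub hK0 hK hf hf2) ((h1.add h2).div_const 2)
          fun p => (le_abs_self _).trans (abs_mul_mul_le_of_nonneg (hK0 p.2))
    _ = ∫ x, f x ^ 2 ∂μ := by
        rw [integral_div, integral_add h1 h2, integral_prod_sq_sub_mul hK hf2,
          integral_prod_mul (fun x => f x ^ 2) K, hK1]
        ring

end Convolution

section Energy

variable {α : Type*} [MeasurableSpace α] {μ : Measure α} {u ut : ℝ → α → ℝ} {g : α → ℝ}

lemma hasDerivAt_integral_sq {s : Set ℝ} {t₀ : ℝ} (hs : s ∈ 𝓝 t₀)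
    (hu_meas : ∀ t ∈ s, AEStronglyMeasurable (u t) μ) (hut_meas : AEStronglyMeasurable (ut t₀) μ)
    (hg : MemLp g 2 μ) (hu : ∀ t ∈ s, ∀ x, |u t x| ≤ g x) (hut : ∀ t ∈ s, ∀ x, |ut t x| ≤ g x)
    (hderiv : ∀ t ∈ s, ∀ x, HasDerivAt (fun t => u t x) (ut t x) t) :
    HasDerivAt (fun t => ∫ x, u t x ^ 2 ∂μ) (2 * ∫ x, u t₀ x * ut t₀ x ∂μ) t₀ := by
  have ht₀ : t₀ ∈ s := mem_of_mem_nhds hs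
  have hu_L2 : MemLp (u t₀) 2 μ :=
    hg.mono' (hu_meas t₀ ht₀) (ae_of_all _ fun x => hu t₀ ht₀ x)
  rw [← integral_const_mul]
  refine (hasDerivAt_integral_of_dominated_loc_of_deriv_le (F := fun t x => u t x ^ 2)
    (F' := fun t x => 2 * (u t x * ut t x)) (bound := fun x => 2 * g x ^ 2) hs
    (eventually_of_mem hs fun t ht => (hu_meas t ht).pow 2) hu_L2.integrable_sq
    (((hu_meas t₀ ht₀).mul hut_meas).const_mul 2)
    (ae_of_all _ fun x t ht => ?_) (hg.integrable_sq.const_mul 2)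
    (ae_of_all _ fun x t ht => ?_)).2
  · rw [norm_mul, norm_mul, Real.norm_two, Real.norm_eq_abs, Real.norm_eq_abs, sq]
    gcongr
    exacts [(abs_nonneg _).trans (hu t ht x), hu t ht x, hut t ht x]
  · exact ((hderiv t ht x).pow 2).congr_deriv (by push_cast; ring)

lemma antitoneOn_integral_sq {a b : ℝ}
    (hu_meas : ∀ t ∈ Icc a b, AEStronglyMeasurable (u t) μ)
    (hut_meas : ∀ t ∈ Ioo a b, AEStronglyMeasurable (ut t) μ) (hg : MemLp g 2 μ)
    (hu : ∀ t ∈ Icc a b, ∀ x, |u t x| ≤ g x) (hut : ∀ t ∈ Ioo a b, ∀ x, |ut t x| ≤ g x)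
    (hderiv : ∀ t ∈ Icc a b, ∀ x, HasDerivWithinAt (fun t => u t x) (ut t x) (Icc a b) t)
    (hdiss : ∀ t ∈ Ioo a b, ∫ x, u t x * ut t x ∂μ ≤ 0) :
    AntitoneOn (fun t => ∫ x, u t x ^ 2 ∂μ) (Icc a b) := by
  have hcont : ContinuousOn (fun t => ∫ x, u t x ^ 2 ∂μ) (Icc a b) := by
    refine continuousOn_of_dominated (bound := fun x => g x ^ 2)
      (fun t ht => (hu_meas t ht).pow 2) (fun t ht => ae_of_all _ fun x => ?_)
      hg.integrable_sq (ae_of_all _ fun x => ?_)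
    · rw [norm_pow, Real.norm_eq_abs]
      exact pow_le_pow_left₀ (abs_nonneg _) (hu t ht x) 2
    · exact ContinuousOn.pow (fun t ht => (hderiv t ht x).continuousWithinAt) 2
  have hderiv' : ∀ t ∈ Ioo a b,
      HasDerivAt (fun t => ∫ x, u t x ^ 2 ∂μ) (2 * ∫ x, u t x * ut t x ∂μ) t := fun t ht =>
    hasDerivAt_integral_sq (isOpen_Ioo.mem_nhds ht) (fun t ht => hu_meas t (Ioo_subset_Icc_self ht))
      (hut_meas t ht) hg (fun t ht => hu t (Ioo_subset_Icc_self ht)) hut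
      fun t ht x => (hderiv t (Ioo_subset_Icc_self ht) x).hasDerivAt (Icc_mem_nhds ht.1 ht.2)
  refine antitoneOn_of_deriv_nonpos (convex_Icc a b) hcont ?_ ?_ <;> rw [interior_Icc]
  · exact fun t ht => (hderiv' t ht).differentiableAt.differentiableWithinAt
  · intro t ht
    rw [(hderiv' t ht).deriv]
    linarith [hdiss t ht]

end Energy

lemma integral_mul_le_zero_of_augmented_burgers {K v vt vx vxx : ℝ → ℝ}
    (hK0 : ∀ y, 0 ≤ K y) (hK : Integrable K) (hK1 : ∫ y, K y = 1)
    (hv_L2 : MemLp v 2) (hvt_L2 : MemLp vt 2) (hvx_L2 : MemLp vx 2)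
    (hvx : ∀ x, HasDerivAt v (vx x) x) (hvxx : ∀ x, HasDerivAt vx (vxx x) x)
    (hv_lim : Tendsto v (cocompact ℝ) (𝓝 0)) (hvx_lim : Tendsto vx (cocompact ℝ) (𝓝 0))
    (hpde : ∀ x, vt x = v x * vx x + vxx x + ((K ⋆ v) x - v x) + vx x) :
    ∫ x, v x * vt x ≤ 0 := by
  have hv : Measurable v :=
    (continuous_iff_continuousAt.2 fun x => (hvx x).continuousAt).measurable
  have hv2 := hv_L2.integrable_sq
  have hvx2 := hvx_L2.integrable_sq
  have hconv := integrable_mul_convolution hK0 hK hv hv2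
  have hvvt : Integrable fun x => v x * vt x := hv_L2.integrable_mul hvt_L2
  have hgap : Integrable fun x => v x ^ 2 - v x * (K ⋆ v) x := hv2.sub hconv
  have hprim : ∀ x, HasDerivAt (fun x => v x ^ 3 / 3 + v x ^ 2 / 2 + v x * vx x)
      (v x * vt x + vx x ^ 2 + (v x ^ 2 - v x * (K ⋆ v) x)) x := by
    intro x
    refine (((((hvx x).pow 3).div_const 3).add (((hvx x).pow 2).div_const 2)).add
      ((hvx x).mul (hvxx x))).congr_deriv ?_
    rw [hpde x]
    push_cast
    ring
  have hprim'_int : Integrable fun x => v x * vt x + vx x ^ 2 + (v x ^ 2 - v x * (K ⋆ v) x) :=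
    (hvvt.fun_add hvx2).fun_add hgap
  have hprim'_zero : ∫ x, (v x * vt x + vx x ^ 2 + (v x ^ 2 - v x * (K ⋆ v) x)) = 0 := by
    have hlim : Tendsto (fun x => v x ^ 3 / 3 + v x ^ 2 / 2 + v x * vx x) (cocompact ℝ) (𝓝 0) := by
      simpa using (((hv_lim.pow 3).div_const 3).add ((hv_lim.pow 2).div_const 2)).add
        (hv_lim.mul hvx_lim)
    rw [integral_of_hasDerivAt_of_tendsto hprim hprim'_int (hlim.mono_left atBot_le_cocompact)
      (hlim.mono_left atTop_le_cocompact), sub_self]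
  rw [integral_add (hvvt.fun_add hvx2) hgap, integral_add hvvt hvx2,
    integral_sub hv2 hconv] at hprim'_zero
  have hconv_le := integral_mul_convolution_le_integral_sq hK0 hK hK1 hv hv2
  have hvx2_nonneg : 0 ≤ ∫ x, vx x ^ 2 := integral_nonneg fun x => sq_nonneg (vx x)
  linarith

theorem eLpNorm_le_of_augmented_burgers_solution_general
    (K : ℝ → ℝ) (hK : ∀ z : ℝ, K z = if 0 < z then Real.exp (-z) else 0)
    (T : ℝ)
    (u ut ux uxx : ℝ → ℝ → ℝ)
    (hut_cont : ContinuousOn (fun p : ℝ × ℝ => ut p.1 p.2) (Set.Icc 0 T ×ˢ Set.univ))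
    (hut : ∀ t ∈ Set.Icc 0 T, ∀ x : ℝ,
      HasDerivWithinAt (fun s => u s x) (ut t x) (Set.Icc 0 T) t)
    (hux : ∀ t ∈ Set.Icc 0 T, ∀ x : ℝ, HasDerivAt (fun y => u t y) (ux t x) x)
    (huxx : ∀ t ∈ Set.Icc 0 T, ∀ x : ℝ, HasDerivAt (fun y => ux t y) (uxx t x) x)
    (C : ℝ)
    (hdecay : ∀ t ∈ Set.Icc 0 T, ∀ x : ℝ,
      |u t x| + |ut t x| + |ux t x| + |uxx t x| ≤ C / (1 + x ^ 2))
    (hpde : ∀ t ∈ Set.Icc 0 T, ∀ x : ℝ,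
      ut t x = u t x * ux t x + uxx t x
        + ((∫ y : ℝ, K y * u t (x - y)) - u t x) + ux t x) :
    ∀ t ∈ Set.Icc 0 T,
      eLpNorm (fun x => u t x) 2 (volume : Measure ℝ)
        ≤ eLpNorm (fun x => u 0 x) 2 (volume : Measure ℝ) := by
  intro t ht
  have h0 : (0 : ℝ) ∈ Icc 0 T := ⟨le_rfl, ht.1.trans ht.2⟩
  obtain rfl : K = (Ioi 0).indicator fun z => exp (-z) :=
    funext fun z => by simp [hK, indicator_apply]
  have hbound : ∀ s ∈ Icc 0 T, ∀ x, |u s x| ≤ C / (1 + x ^ 2) ∧ |ut s x| ≤ C / (1 + x ^ 2)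
      ∧ |ux s x| ≤ C / (1 + x ^ 2) := by
    intro s hs x
    have := hdecay s hs x
    refine ⟨?_, ?_, ?_⟩ <;> linarith [abs_nonneg (u s x), abs_nonneg (ut s x),
      abs_nonneg (ux s x), abs_nonneg (uxx s x)]
  have hL2 (f : ℝ → ℝ) (hf : Continuous f) (hfC : ∀ x, |f x| ≤ C / (1 + x ^ 2)) : MemLp f 2 :=
    (memLp_two_div_one_add_sq C).mono' hf.aestronglyMeasurable (ae_of_all _ hfC)
  have cont_u (s) (hs : s ∈ Icc 0 T) : Continuous (u s) :=
    continuous_iff_continuousAt.2 fun x => (hux s hs x).continuousAt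
  have cont_ux (s) (hs : s ∈ Icc 0 T) : Continuous (ux s) :=
    continuous_iff_continuousAt.2 fun x => (huxx s hs x).continuousAt
  have cont_ut (s) (hs : s ∈ Icc 0 T) : Continuous (ut s) :=
    hut_cont.comp_continuous (.prodMk_right s) fun _ => ⟨hs, trivial⟩
  refine eLpNorm_two_le_of_integral_sq_le (hL2 _ (cont_u t ht) fun x => (hbound t ht x).1)
    (hL2 _ (cont_u 0 h0) fun x => (hbound 0 h0 x).1) ?_
  refine antitoneOn_integral_sq (fun s hs => (cont_u s hs).aestronglyMeasurable)
    (fun s hs => (cont_ut s (Ioo_subset_Icc_self hs)).aestronglyMeasurable)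
    (memLp_two_div_one_add_sq C) (fun s hs x => (hbound s hs x).1)
    (fun s hs x => (hbound s (Ioo_subset_Icc_self hs) x).2.1) hut (fun s hs => ?_) h0 ht ht.1
  have hs := Ioo_subset_Icc_self hs
  exact integral_mul_le_zero_of_augmented_burgers (indicator_nonneg fun z _ => (exp_pos _).le)
    integrable_indicator_Ioi_exp_neg integral_indicator_Ioi_exp_neg
    (hL2 _ (cont_u s hs) fun x => (hbound s hs x).1)
    (hL2 _ (cont_ut s hs) fun x => (hbound s hs x).2.1)
    (hL2 _ (cont_ux s hs) fun x => (hbound s hs x).2.2) (hux s hs) (huxx s hs)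
    (squeeze_zero_norm (fun x => (hbound s hs x).1) (tendsto_div_one_add_sq_cocompact C))
    (squeeze_zero_norm (fun x => (hbound s hs x).2.2) (tendsto_div_one_add_sq_cocompact C))
    (hpde s hs)

/-- The `L²(ℝ)`-norm does not increase along classical, spatially decaying solutions of the
augmented Burgers equation `u_t = (u²/2)_x + u_xx + K*u - u + u_x` with
`K(z) = e^{-z} 1_{z>0}`. -/
theorem eLpNorm_le_of_augmented_burgers_solution
    (K : ℝ → ℝ) (hK : ∀ z : ℝ, K z = if 0 < z then Real.exp (-z) else 0)
    (T : ℝ) (hT : 0 < T)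
    (u ut ux uxx : ℝ → ℝ → ℝ)
    (hu_cont : ContinuousOn (fun p : ℝ × ℝ => u p.1 p.2) (Set.Icc 0 T ×ˢ Set.univ))
    (hut_cont : ContinuousOn (fun p : ℝ × ℝ => ut p.1 p.2) (Set.Icc 0 T ×ˢ Set.univ))
    (hux_cont : ContinuousOn (fun p : ℝ × ℝ => ux p.1 p.2) (Set.Icc 0 T ×ˢ Set.univ))
    (huxx_cont : ContinuousOn (fun p : ℝ × ℝ => uxx p.1 p.2) (Set.Icc 0 T ×ˢ Set.univ))
    (hut : ∀ t ∈ Set.Icc 0 T, ∀ x : ℝ,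
      HasDerivWithinAt (fun s => u s x) (ut t x) (Set.Icc 0 T) t)
    (hux : ∀ t ∈ Set.Icc 0 T, ∀ x : ℝ, HasDerivAt (fun y => u t y) (ux t x) x)
    (huxx : ∀ t ∈ Set.Icc 0 T, ∀ x : ℝ, HasDerivAt (fun y => ux t y) (uxx t x) x)
    (C : ℝ)
    (hdecay : ∀ t ∈ Set.Icc 0 T, ∀ x : ℝ,
      |u t x| + |ut t x| + |ux t x| + |uxx t x| ≤ C / (1 + x ^ 2))
    (hpde : ∀ t ∈ Set.Icc 0 T, ∀ x : ℝ,
      ut t x = u t x * ux t x + uxx t x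
        + ((∫ y : ℝ, K y * u t (x - y)) - u t x) + ux t x) :
    ∀ t ∈ Set.Icc 0 T,
      eLpNorm (fun x => u t x) 2 (volume : Measure ℝ)
        ≤ eLpNorm (fun x => u 0 x) 2 (volume : Measure ℝ) :=
  eLpNorm_le_of_augmented_burgers_solution_general K hK T u ut ux uxx hut_cont hut hux huxx C hdecay
    hpde
end
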